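/- arXiv:math/9906094 — 10 statements merged into one kernel-verified Lean document; each statement's English description precedes it below -/
import Mathlib

section
/- A linear map δ : 𝔤 → 𝔤 ⊗ 𝔤 whose values are antisymmetric tensors (i.e. the flip map sends δ(X) to −δ(X) for all X) satisfies the 1-cocycle condition δ([X,Y]) = ad_X(δ(Y)) − ad_Y(δ(X)) for all X, Y ∈ 𝔤 if and only if there exist real numbers α, ξ, ν, β₁, β₂, β₃, β₄, β₅, β₆ such that: δ(K) = β₆ K∧P + ξ K∧M + ν P∧H + β₁ P∧M + β₂ H∧M; δ(H) = β₅ K∧M − (β₆+α) P∧H + β₃ P∧M + (β₄−ξ) H∧M; δ(P) = β₄ P∧M + (β₆+α) H∧M; δ(M) = α P∧M. -/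
open scoped TensorProduct

/-- `X∧Y = X⊗Y − Y⊗X ∈ 𝔤⊗𝔤`. -/
noncomputable def wedge {L : Type} [AddCommGroup L] [Module ℝ L] (x y : L) :
    L ⊗[ℝ] L := x ⊗ₜ[ℝ] y - y ⊗ₜ[ℝ] x

lemma lie_coord_aux {L : Type} [LieRing L] [LieAlgebra ℝ L] (b : Module.Basis (Fin 4) ℝ L)
    (X u : L) (j : Fin 4) :
    b.repr ⁅X, u⁆ j = ∑ p : Fin 4, b.repr u p * b.repr ⁅X, b p⁆ j := by
  have h : ⁅X, u⁆ = ∑ p : Fin 4, b.repr u p • ⁅X, b p⁆ := by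
    conv_lhs => rw [← b.sum_repr u, ← LieModule.toEnd_apply_apply ℝ L L X]
    rw [map_sum]
    simp [LieModule.toEnd_apply_apply]
  rw [h, map_sum]
  simp [Finsupp.finset_sum_apply]

lemma repr_lie_apply_aux {L : Type} [LieRing L] [LieAlgebra ℝ L] (b : Module.Basis (Fin 4) ℝ L)
    (X : L) (t : L ⊗[ℝ] L) (j k : Fin 4) :
    (b.tensorProduct b).repr ⁅X, t⁆ (j, k) =
      ∑ p : Fin 4, b.repr ⁅X, b p⁆ j * (b.tensorProduct b).repr t (p, k) +
      ∑ q : Fin 4, b.repr ⁅X, b q⁆ k * (b.tensorProduct b).repr t (j, q) := by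
  induction t using TensorProduct.induction_on with
  | zero => simp
  | tmul u v =>
      rw [TensorProduct.LieModule.lie_tmul_right, map_add, Finsupp.add_apply]
      simp only [Module.Basis.tensorProduct_repr_tmul_apply, smul_eq_mul]
      rw [lie_coord_aux b X u j, lie_coord_aux b X v k]
      rw [Finset.sum_mul, Finset.mul_sum]
      congr 1
      · exact Finset.sum_congr rfl (fun p _ => by ring)
      · exact Finset.sum_congr rfl (fun p _ => by ring)
  | add t₁ t₂ h₁ h₂ =>
      rw [lie_add, map_add, Finsupp.add_apply, h₁, h₂]
      simp only [map_add, Finsupp.add_apply, mul_add, Finset.sum_add_distrib]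
      abel

lemma repr_comm_apply_aux {L : Type} [AddCommGroup L] [Module ℝ L] (b : Module.Basis (Fin 4) ℝ L)
    (t : L ⊗[ℝ] L) (j k : Fin 4) :
    (b.tensorProduct b).repr (TensorProduct.comm ℝ L L t) (j, k) =
      (b.tensorProduct b).repr t (k, j) := by
  induction t using TensorProduct.induction_on with
  | zero => simp
  | tmul u v => simp [mul_comm]
  | add t₁ t₂ h₁ h₂ => simp [h₁, h₂]

lemma tensor_expand_aux {L : Type} [AddCommGroup L] [Module ℝ L] (b : Module.Basis (Fin 4) ℝ L)
    (t : L ⊗[ℝ] L) :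
    t = ∑ j : Fin 4, ∑ k : Fin 4, (b.tensorProduct b).repr t (j, k) • (b j ⊗ₜ[ℝ] b k) := by
  conv_lhs => rw [← (b.tensorProduct b).sum_repr t]
  rw [Fintype.sum_prod_type]
  simp [Module.Basis.tensorProduct_apply]

set_option maxHeartbeats 4000000 in
/-- A skew-symmetric linear map `δ : 𝔤 → 𝔤⊗𝔤` on the (1+1) extended Galilei algebra
satisfies the 1-cocycle condition iff it belongs to the 9-parameter family (bf). -/
theorem extended_galilei_cocycles
    {L : Type} [LieRing L] [LieAlgebra ℝ L]
    (K H P M : L) (b : Module.Basis (Fin 4) ℝ L)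
    (hbK : b 0 = K) (hbH : b 1 = H) (hbP : b 2 = P) (hbM : b 3 = M)
    (hKH : ⁅K, H⁆ = P) (hKP : ⁅K, P⁆ = M) (hHP : ⁅H, P⁆ = (0 : L))
    (hMK : ⁅M, K⁆ = (0 : L)) (hMH : ⁅M, H⁆ = (0 : L)) (hMP : ⁅M, P⁆ = (0 : L))
    (δ : L →ₗ[ℝ] L ⊗[ℝ] L)
    (hskew : ∀ X : L, TensorProduct.comm ℝ L L (δ X) = - δ X) :
    (∀ X Y : L, δ ⁅X, Y⁆ = ⁅X, δ Y⁆ - ⁅Y, δ X⁆) ↔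
      ∃ α ξ ν β₁ β₂ β₃ β₄ β₅ β₆ : ℝ,
        δ K = β₆ • wedge K P + ξ • wedge K M + ν • wedge P H +
              β₁ • wedge P M + β₂ • wedge H M ∧
        δ H = β₅ • wedge K M - (β₆ + α) • wedge P H +
              β₃ • wedge P M + (β₄ - ξ) • wedge H M ∧
        δ P = β₄ • wedge P M + (β₆ + α) • wedge H M ∧
        δ M = α • wedge P M := by
  subst hbK hbH hbP hbM
  have h03 : ⁅b 0, b 3⁆ = 0 := by rw [← lie_skew, hMK, neg_zero]
  have h10 : ⁅b 1, b 0⁆ = -b 2 := by rw [← lie_skew, hKH]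
  have h20 : ⁅b 2, b 0⁆ = -b 3 := by rw [← lie_skew, hKP]
  have h21 : ⁅b 2, b 1⁆ = 0 := by rw [← lie_skew, hHP, neg_zero]
  have h13 : ⁅b 1, b 3⁆ = 0 := by rw [← lie_skew, hMH, neg_zero]
  have h23 : ⁅b 2, b 3⁆ = 0 := by rw [← lie_skew, hMP, neg_zero]
  constructor
  · intro hco
    have hsk : ∀ i j k : Fin 4, (b.tensorProduct b).repr (δ (b i)) (k, j) =
        - (b.tensorProduct b).repr (δ (b i)) (j, k) := by
      intro i j k
      have h := congrArg (fun t => (b.tensorProduct b).repr t (j, k)) (hskew (b i))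
      simpa [repr_comm_apply_aux] using h
    have hdz : ∀ i j : Fin 4, (b.tensorProduct b).repr (δ (b i)) (j, j) = 0 := by
      intro i j; have := hsk i j j; linarith
    -- pair (0,3) : δ 0 = ⁅b0, δ b3⁆ - ⁅b3, δ b0⁆
    have m01 : (b.tensorProduct b).repr (δ (b 3)) (0, 1) = 0 := by
      have h := congrArg (fun t => (b.tensorProduct b).repr t (0, 2)) (hco (b 0) (b 3))
      simp only [h03, map_zero, map_sub, Finsupp.coe_zero, Pi.zero_apply, Finsupp.sub_apply,
        repr_lie_apply_aux, Fin.sum_univ_four, hKH, hKP, hHP, hMK, hMH, hMP, h03, h10, h20, h21, h13, h23, lie_self,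
        map_neg, Module.Basis.repr_self, Finsupp.neg_apply, Finsupp.single_apply] at h
      simp [← Prod.mk_zero_zero, ← Prod.mk_one_one] at h
      linarith
    have m02 : (b.tensorProduct b).repr (δ (b 3)) (0, 2) = 0 := by
      have h := congrArg (fun t => (b.tensorProduct b).repr t (0, 3)) (hco (b 0) (b 3))
      simp only [h03, map_zero, map_sub, Finsupp.coe_zero, Pi.zero_apply, Finsupp.sub_apply,
        repr_lie_apply_aux, Fin.sum_univ_four, hKH, hKP, hHP, hMK, hMH, hMP, h03, h10, h20, h21, h13, h23, lie_self,
        map_neg, Module.Basis.repr_self, Finsupp.neg_apply, Finsupp.single_apply] at h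
      simp [← Prod.mk_zero_zero, ← Prod.mk_one_one] at h
      linarith
    have m12 : (b.tensorProduct b).repr (δ (b 3)) (1, 2) = 0 := by
      have h := congrArg (fun t => (b.tensorProduct b).repr t (1, 3)) (hco (b 0) (b 3))
      simp only [h03, map_zero, map_sub, Finsupp.coe_zero, Pi.zero_apply, Finsupp.sub_apply,
        repr_lie_apply_aux, Fin.sum_univ_four, hKH, hKP, hHP, hMK, hMH, hMP, h03, h10, h20, h21, h13, h23, lie_self,
        map_neg, Module.Basis.repr_self, Finsupp.neg_apply, Finsupp.single_apply] at h
      simp [← Prod.mk_zero_zero, ← Prod.mk_one_one] at h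
      linarith
    have m13 : (b.tensorProduct b).repr (δ (b 3)) (1, 3) = 0 := by
      have h := congrArg (fun t => (b.tensorProduct b).repr t (2, 3)) (hco (b 0) (b 3))
      simp only [h03, map_zero, map_sub, Finsupp.coe_zero, Pi.zero_apply, Finsupp.sub_apply,
        repr_lie_apply_aux, Fin.sum_univ_four, hKH, hKP, hHP, hMK, hMH, hMP, h03, h10, h20, h21, h13, h23, lie_self,
        map_neg, Module.Basis.repr_self, Finsupp.neg_apply, Finsupp.single_apply] at h
      simp [← Prod.mk_zero_zero, ← Prod.mk_one_one] at h
      linarith [hdz 3 2]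
    -- pair (1,3)
    have m03 : (b.tensorProduct b).repr (δ (b 3)) (0, 3) = 0 := by
      have h := congrArg (fun t => (b.tensorProduct b).repr t (2, 3)) (hco (b 1) (b 3))
      simp only [h13, map_zero, map_sub, Finsupp.coe_zero, Pi.zero_apply, Finsupp.sub_apply,
        repr_lie_apply_aux, Fin.sum_univ_four, hKH, hKP, hHP, hMK, hMH, hMP, h03, h10, h20, h21, h13, h23, lie_self,
        map_neg, Module.Basis.repr_self, Finsupp.neg_apply, Finsupp.single_apply] at h
      simp [← Prod.mk_zero_zero, ← Prod.mk_one_one] at h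
      linarith
    -- pair (0,1) : δ (b 2) = ⁅b0, δ b1⁆ - ⁅b1, δ b0⁆
    have p01 : (b.tensorProduct b).repr (δ (b 2)) (0, 1) = 0 := by
      have h := congrArg (fun t => (b.tensorProduct b).repr t (0, 1)) (hco (b 0) (b 1))
      simp only [hKH, map_sub, Finsupp.sub_apply,
        repr_lie_apply_aux, Fin.sum_univ_four, hKH, hKP, hHP, hMK, hMH, hMP, h03, h10, h20, h21, h13, h23, lie_self,
        map_neg, Module.Basis.repr_self, Finsupp.neg_apply, Finsupp.single_apply] at h
      simp [← Prod.mk_zero_zero, ← Prod.mk_one_one] at h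
      linarith
    have e1 : (b.tensorProduct b).repr (δ (b 2)) (0, 2) =
        (b.tensorProduct b).repr (δ (b 1)) (0, 1) := by
      have h := congrArg (fun t => (b.tensorProduct b).repr t (0, 2)) (hco (b 0) (b 1))
      simp only [hKH, map_sub, Finsupp.sub_apply,
        repr_lie_apply_aux, Fin.sum_univ_four, hKH, hKP, hHP, hMK, hMH, hMP, h03, h10, h20, h21, h13, h23, lie_self,
        map_neg, Module.Basis.repr_self, Finsupp.neg_apply, Finsupp.single_apply] at h
      simp [← Prod.mk_zero_zero, ← Prod.mk_one_one] at h
      linarith [hdz 0 0]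
    have e2 : (b.tensorProduct b).repr (δ (b 2)) (0, 3) =
        (b.tensorProduct b).repr (δ (b 1)) (0, 2) := by
      have h := congrArg (fun t => (b.tensorProduct b).repr t (0, 3)) (hco (b 0) (b 1))
      simp only [hKH, map_sub, Finsupp.sub_apply,
        repr_lie_apply_aux, Fin.sum_univ_four, hKH, hKP, hHP, hMK, hMH, hMP, h03, h10, h20, h21, h13, h23, lie_self,
        map_neg, Module.Basis.repr_self, Finsupp.neg_apply, Finsupp.single_apply] at h
      simp [← Prod.mk_zero_zero, ← Prod.mk_one_one] at h
      linarith [hdz 0 0]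
    have e3 : (b.tensorProduct b).repr (δ (b 2)) (1, 2) =
        - (b.tensorProduct b).repr (δ (b 0)) (0, 1) := by
      have h := congrArg (fun t => (b.tensorProduct b).repr t (1, 2)) (hco (b 0) (b 1))
      simp only [hKH, map_sub, Finsupp.sub_apply,
        repr_lie_apply_aux, Fin.sum_univ_four, hKH, hKP, hHP, hMK, hMH, hMP, h03, h10, h20, h21, h13, h23, lie_self,
        map_neg, Module.Basis.repr_self, Finsupp.neg_apply, Finsupp.single_apply] at h
      simp [← Prod.mk_zero_zero, ← Prod.mk_one_one] at h
      have hs := hsk 0 0 1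
      linarith [hdz 1 1]
    have e4 : (b.tensorProduct b).repr (δ (b 2)) (1, 3) =
        (b.tensorProduct b).repr (δ (b 1)) (1, 2) := by
      have h := congrArg (fun t => (b.tensorProduct b).repr t (1, 3)) (hco (b 0) (b 1))
      simp only [hKH, map_sub, Finsupp.sub_apply,
        repr_lie_apply_aux, Fin.sum_univ_four, hKH, hKP, hHP, hMK, hMH, hMP, h03, h10, h20, h21, h13, h23, lie_self,
        map_neg, Module.Basis.repr_self, Finsupp.neg_apply, Finsupp.single_apply] at h
      simp [← Prod.mk_zero_zero, ← Prod.mk_one_one] at h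
      have hs := hsk 0 0 1
      linarith
    have e5 : (b.tensorProduct b).repr (δ (b 2)) (2, 3) =
        (b.tensorProduct b).repr (δ (b 1)) (1, 3) +
        (b.tensorProduct b).repr (δ (b 0)) (0, 3) := by
      have h := congrArg (fun t => (b.tensorProduct b).repr t (2, 3)) (hco (b 0) (b 1))
      simp only [hKH, map_sub, Finsupp.sub_apply,
        repr_lie_apply_aux, Fin.sum_univ_four, hKH, hKP, hHP, hMK, hMH, hMP, h03, h10, h20, h21, h13, h23, lie_self,
        map_neg, Module.Basis.repr_self, Finsupp.neg_apply, Finsupp.single_apply] at h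
      simp [← Prod.mk_zero_zero, ← Prod.mk_one_one] at h
      have hs := hsk 0 0 3
      linarith [hdz 1 2, hdz 1 1]
    -- pair (0,2) : δ (b 3) = ⁅b0, δ b2⁆ - ⁅b2, δ b0⁆
    have f1 : (b.tensorProduct b).repr (δ (b 2)) (0, 2) = 0 := by
      have h := congrArg (fun t => (b.tensorProduct b).repr t (0, 3)) (hco (b 0) (b 2))
      simp only [hKP, map_sub, Finsupp.sub_apply,
        repr_lie_apply_aux, Fin.sum_univ_four, hKH, hKP, hHP, hMK, hMH, hMP, h03, h10, h20, h21, h13, h23, lie_self,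
        map_neg, Module.Basis.repr_self, Finsupp.neg_apply, Finsupp.single_apply] at h
      simp [← Prod.mk_zero_zero, ← Prod.mk_one_one] at h
      linarith [hdz 0 0, m03]
    have f2 : (b.tensorProduct b).repr (δ (b 0)) (0, 1) = 0 := by
      have h := congrArg (fun t => (b.tensorProduct b).repr t (1, 3)) (hco (b 0) (b 2))
      simp only [hKP, map_sub, Finsupp.sub_apply,
        repr_lie_apply_aux, Fin.sum_univ_four, hKH, hKP, hHP, hMK, hMH, hMP, h03, h10, h20, h21, h13, h23, lie_self,
        map_neg, Module.Basis.repr_self, Finsupp.neg_apply, Finsupp.single_apply] at h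
      simp [← Prod.mk_zero_zero, ← Prod.mk_one_one] at h
      have hs := hsk 0 0 1
      linarith [m13, e3]
    have f3 : (b.tensorProduct b).repr (δ (b 2)) (1, 3) =
        (b.tensorProduct b).repr (δ (b 0)) (0, 2) +
        (b.tensorProduct b).repr (δ (b 3)) (2, 3) := by
      have h := congrArg (fun t => (b.tensorProduct b).repr t (2, 3)) (hco (b 0) (b 2))
      simp only [hKP, map_sub, Finsupp.sub_apply,
        repr_lie_apply_aux, Fin.sum_univ_four, hKH, hKP, hHP, hMK, hMH, hMP, h03, h10, h20, h21, h13, h23, lie_self,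
        map_neg, Module.Basis.repr_self, Finsupp.neg_apply, Finsupp.single_apply] at h
      simp [← Prod.mk_zero_zero, ← Prod.mk_one_one] at h
      have hs := hsk 0 0 2
      linarith [hdz 2 2]
    -- pair (1,2) : δ 0 = ⁅b1, δ b2⁆ - ⁅b2, δ b1⁆
    have g1 : (b.tensorProduct b).repr (δ (b 1)) (0, 2) = 0 := by
      have h := congrArg (fun t => (b.tensorProduct b).repr t (2, 3)) (hco (b 1) (b 2))
      simp only [hHP, map_zero, map_sub, Finsupp.coe_zero, Pi.zero_apply, Finsupp.sub_apply,
        repr_lie_apply_aux, Fin.sum_univ_four, hKH, hKP, hHP, hMK, hMH, hMP, h03, h10, h20, h21, h13, h23, lie_self,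
        map_neg, Module.Basis.repr_self, Finsupp.neg_apply, Finsupp.single_apply] at h
      simp [← Prod.mk_zero_zero, ← Prod.mk_one_one] at h
      have hs := hsk 1 0 2
      linarith [e2]
    have p03 : (b.tensorProduct b).repr (δ (b 2)) (0, 3) = 0 := by rw [e2, g1]
    have h01 : (b.tensorProduct b).repr (δ (b 1)) (0, 1) = 0 := by rw [← e1, f1]
    have p12 : (b.tensorProduct b).repr (δ (b 2)) (1, 2) = 0 := by rw [e3, f2, neg_zero]
    refine ⟨(b.tensorProduct b).repr (δ (b 3)) (2, 3),
      (b.tensorProduct b).repr (δ (b 0)) (0, 3),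
      - (b.tensorProduct b).repr (δ (b 0)) (1, 2),
      (b.tensorProduct b).repr (δ (b 0)) (2, 3),
      (b.tensorProduct b).repr (δ (b 0)) (1, 3),
      (b.tensorProduct b).repr (δ (b 1)) (2, 3),
      (b.tensorProduct b).repr (δ (b 1)) (1, 3) + (b.tensorProduct b).repr (δ (b 0)) (0, 3),
      (b.tensorProduct b).repr (δ (b 1)) (0, 3),
      (b.tensorProduct b).repr (δ (b 0)) (0, 2), ?_, ?_, ?_, ?_⟩
    · -- δ (b 0)
      conv_lhs => rw [tensor_expand_aux b (δ (b 0))]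
      simp only [Fin.sum_univ_four, hdz, f2, hsk 0 0 1, hsk 0 0 2, hsk 0 0 3,
        hsk 0 1 2, hsk 0 1 3, hsk 0 2 3]
      simp only [wedge, f2]
      module
    · -- δ (b 1)
      have h12f : (b.tensorProduct b).repr (δ (b 1)) (1, 2) =
          (b.tensorProduct b).repr (δ (b 0)) (0, 2) +
          (b.tensorProduct b).repr (δ (b 3)) (2, 3) := by rw [← e4, f3]
      conv_lhs => rw [tensor_expand_aux b (δ (b 1))]
      simp only [Fin.sum_univ_four, hdz, h01, g1, hsk 1 0 1, hsk 1 0 2, hsk 1 0 3,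
        hsk 1 1 2, hsk 1 1 3, hsk 1 2 3, h12f]
      simp only [wedge, h01, g1]
      module
    · -- δ (b 2)
      conv_lhs => rw [tensor_expand_aux b (δ (b 2))]
      simp only [Fin.sum_univ_four, hdz, p01, f1, p03, p12, hsk 2 0 1, hsk 2 0 2, hsk 2 0 3,
        hsk 2 1 2, hsk 2 1 3, hsk 2 2 3, f3, e5]
      simp only [wedge, p01, f1, p03, p12]
      module
    · -- δ (b 3)
      conv_lhs => rw [tensor_expand_aux b (δ (b 3))]
      simp only [Fin.sum_univ_four, hdz, m01, m02, m03, m12, m13, hsk 3 0 1, hsk 3 0 2,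
        hsk 3 0 3, hsk 3 1 2, hsk 3 1 3, hsk 3 2 3]
      simp only [wedge, m01, m02, m03, m12, m13]
      module
  · rintro ⟨α, ξ, ν, β₁, β₂, β₃, β₄, β₅, β₆, hdK, hdH, hdP, hdM⟩
    obtain ⟨G, hG⟩ : ∃ G : L →ₗ[ℝ] L →ₗ[ℝ] L ⊗[ℝ] L,
        ∀ X Y, G X Y = δ ⁅X, Y⁆ - (⁅X, δ Y⁆ - ⁅Y, δ X⁆) :=
      ⟨LinearMap.mk₂ ℝ (fun X Y => δ ⁅X, Y⁆ - (⁅X, δ Y⁆ - ⁅Y, δ X⁆))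
        (fun X X' Y => by simp only [add_lie, map_add, lie_add]; abel)
        (fun r X Y => by simp only [smul_lie, map_smul, lie_smul, smul_sub]; try abel)
        (fun X Y Y' => by simp only [lie_add, map_add, add_lie]; abel)
        (fun r X Y => by simp only [lie_smul, map_smul, smul_lie, smul_sub]; try abel),
        fun X Y => rfl⟩
    have hdiag : ∀ X : L, G X X = 0 := by
      intro X; rw [hG]; simp
    have hanti : ∀ X Y : L, G Y X = - G X Y := by
      intro X Y; rw [hG, hG, ← lie_skew X Y, map_neg]; abel
    have k01 : G (b 0) (b 1) = 0 := by
      rw [hG]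
      simp only [hKH, hKP, hHP, hMK, hMH, hMP, h10, h20, h21, h03, h13, h23, lie_self,
        hdK, hdH, hdP, hdM, map_zero, map_add, map_sub, map_smul, map_neg, wedge,
        smul_sub, lie_add, lie_sub, lie_smul, lie_zero, lie_neg,
        TensorProduct.LieModule.lie_tmul_right, TensorProduct.neg_tmul,
        TensorProduct.tmul_neg, TensorProduct.zero_tmul, TensorProduct.tmul_zero]
      module
    have k02 : G (b 0) (b 2) = 0 := by
      rw [hG]
      simp only [hKH, hKP, hHP, hMK, hMH, hMP, h10, h20, h21, h03, h13, h23, lie_self,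
        hdK, hdH, hdP, hdM, map_zero, map_add, map_sub, map_smul, map_neg, wedge,
        smul_sub, lie_add, lie_sub, lie_smul, lie_zero, lie_neg,
        TensorProduct.LieModule.lie_tmul_right, TensorProduct.neg_tmul,
        TensorProduct.tmul_neg, TensorProduct.zero_tmul, TensorProduct.tmul_zero]
      module
    have k03 : G (b 0) (b 3) = 0 := by
      rw [hG]
      simp only [hKH, hKP, hHP, hMK, hMH, hMP, h10, h20, h21, h03, h13, h23, lie_self,
        hdK, hdH, hdP, hdM, map_zero, map_add, map_sub, map_smul, map_neg, wedge,
        smul_sub, lie_add, lie_sub, lie_smul, lie_zero, lie_neg,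
        TensorProduct.LieModule.lie_tmul_right, TensorProduct.neg_tmul,
        TensorProduct.tmul_neg, TensorProduct.zero_tmul, TensorProduct.tmul_zero]
      module
    have k12 : G (b 1) (b 2) = 0 := by
      rw [hG]
      simp only [hKH, hKP, hHP, hMK, hMH, hMP, h10, h20, h21, h03, h13, h23, lie_self,
        hdK, hdH, hdP, hdM, map_zero, map_add, map_sub, map_smul, map_neg, wedge,
        smul_sub, lie_add, lie_sub, lie_smul, lie_zero, lie_neg,
        TensorProduct.LieModule.lie_tmul_right, TensorProduct.neg_tmul,
        TensorProduct.tmul_neg, TensorProduct.zero_tmul, TensorProduct.tmul_zero]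
      module
    have k13 : G (b 1) (b 3) = 0 := by
      rw [hG]
      simp only [hKH, hKP, hHP, hMK, hMH, hMP, h10, h20, h21, h03, h13, h23, lie_self,
        hdK, hdH, hdP, hdM, map_zero, map_add, map_sub, map_smul, map_neg, wedge,
        smul_sub, lie_add, lie_sub, lie_smul, lie_zero, lie_neg,
        TensorProduct.LieModule.lie_tmul_right, TensorProduct.neg_tmul,
        TensorProduct.tmul_neg, TensorProduct.zero_tmul, TensorProduct.tmul_zero]
      module
    have k23 : G (b 2) (b 3) = 0 := by
      rw [hG]
      simp only [hKH, hKP, hHP, hMK, hMH, hMP, h10, h20, h21, h03, h13, h23, lie_self,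
        hdK, hdH, hdP, hdM, map_zero, map_add, map_sub, map_smul, map_neg, wedge,
        smul_sub, lie_add, lie_sub, lie_smul, lie_zero, lie_neg,
        TensorProduct.LieModule.lie_tmul_right, TensorProduct.neg_tmul,
        TensorProduct.tmul_neg, TensorProduct.zero_tmul, TensorProduct.tmul_zero]
      module
    have k10 : G (b 1) (b 0) = 0 := by rw [hanti, k01, neg_zero]
    have k20 : G (b 2) (b 0) = 0 := by rw [hanti, k02, neg_zero]
    have k30 : G (b 3) (b 0) = 0 := by rw [hanti, k03, neg_zero]
    have k21 : G (b 2) (b 1) = 0 := by rw [hanti, k12, neg_zero]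
    have k31 : G (b 3) (b 1) = 0 := by rw [hanti, k13, neg_zero]
    have k32 : G (b 3) (b 2) = 0 := by rw [hanti, k23, neg_zero]
    intro X Y
    have hGz : G = 0 := by
      apply b.ext
      intro i
      apply b.ext
      intro j
      rw [LinearMap.zero_apply, LinearMap.zero_apply]
      fin_cases i <;> fin_cases j
      · exact hdiag (b 0)
      · exact k01
      · exact k02
      · exact k03
      · exact k10
      · exact hdiag (b 1)
      · exact k12
      · exact k13
      · exact k20
      · exact k21
      · exact hdiag (b 2)
      · exact k23
      · exact k30
      · exact k31
      · exact k32
      · exact hdiag (b 3)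
    have h2 := LinearMap.congr_fun (LinearMap.congr_fun hGz X) Y
    rw [hG] at h2
    rw [LinearMap.zero_apply, LinearMap.zero_apply] at h2
    exact sub_eq_zero.mp h2
end

section
/- Let δ : 𝔤 → 𝔤 ⊗ 𝔤 be given by δ(K) = β₆ K∧P + ξ K∧M + ν P∧H + β₁ P∧M + β₂ H∧M, δ(H) = β₅ K∧M − (β₆+α) P∧H + β₃ P∧M + (β₄−ξ) H∧M, δ(P) = β₄ P∧M + (β₆+α) H∧M, δ(M) = α P∧M, for real parameters α, ξ, ν, β₁, …, β₆. Then δ satisfies the co-Jacobi identity (1 + τ + τ²)((δ ⊗ id)(δ(X))) = 0 for all X ∈ 𝔤, where τ : 𝔤⊗𝔤⊗𝔤 → 𝔤⊗𝔤⊗𝔤 is the cyclic rotation u⊗v⊗w ↦ w⊗u⊗v, if and only if the following equations hold: α β₅ = 0, β₆(β₆+α) = 0, β₄(β₆+α) = 0, ν(ξ−β₄) = 0, α(ξ−β₄) − ν β₅ = 0. -/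
open scoped TensorProduct

/-- The cyclic rotation `τ : u⊗v⊗w ↦ w⊗u⊗v` on `L⊗L⊗L`. -/
noncomputable def cyclicRot (L : Type) [AddCommGroup L] [Module ℝ L] :
    (L ⊗[ℝ] L) ⊗[ℝ] L ≃ₗ[ℝ] (L ⊗[ℝ] L) ⊗[ℝ] L :=
  ((TensorProduct.assoc ℝ L L L) ≪≫ₗ (TensorProduct.comm ℝ L (L ⊗[ℝ] L))) ≪≫ₗ
    ((TensorProduct.assoc ℝ L L L) ≪≫ₗ (TensorProduct.comm ℝ L (L ⊗[ℝ] L)))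

lemma cyclicRot_tmul {L : Type} [AddCommGroup L] [Module ℝ L] (x y z : L) :
    cyclicRot L ((x ⊗ₜ[ℝ] y) ⊗ₜ[ℝ] z) = (z ⊗ₜ[ℝ] x) ⊗ₜ[ℝ] y := by
  simp [cyclicRot]

noncomputable def pairF {L M : Type} [AddCommGroup L] [Module ℝ L]
    [AddCommGroup M] [Module ℝ M] (f : L →ₗ[ℝ] ℝ) (g : M →ₗ[ℝ] ℝ) :
    L ⊗[ℝ] M →ₗ[ℝ] ℝ :=
  (TensorProduct.lid ℝ ℝ).toLinearMap ∘ₗ TensorProduct.map f g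

lemma pairF_tmul {L M : Type} [AddCommGroup L] [Module ℝ L]
    [AddCommGroup M] [Module ℝ M] (f : L →ₗ[ℝ] ℝ) (g : M →ₗ[ℝ] ℝ) (x : L) (y : M) :
    pairF f g (x ⊗ₜ[ℝ] y) = f x * g y := by
  simp [pairF, smul_eq_mul]

set_option maxHeartbeats 4000000 in
/-- The 9-parameter (pre)cocommutator of the (1+1) extended Galilei algebra satisfies
the co-Jacobi identity iff the five polynomial equations (bg) hold. -/
theorem extended_galilei_coJacobi_iff
    {L : Type} [LieRing L] [LieAlgebra ℝ L]
    (K H P M : L) (b : Module.Basis (Fin 4) ℝ L)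
    (hbK : b 0 = K) (hbH : b 1 = H) (hbP : b 2 = P) (hbM : b 3 = M)
    (hKH : ⁅K, H⁆ = P) (hKP : ⁅K, P⁆ = M) (hHP : ⁅H, P⁆ = (0 : L))
    (hMK : ⁅M, K⁆ = (0 : L)) (hMH : ⁅M, H⁆ = (0 : L)) (hMP : ⁅M, P⁆ = (0 : L))
    (α ξ ν β₁ β₂ β₃ β₄ β₅ β₆ : ℝ) (δ : L →ₗ[ℝ] L ⊗[ℝ] L)
    (hδK : δ K = β₆ • wedge K P + ξ • wedge K M + ν • wedge P H +
              β₁ • wedge P M + β₂ • wedge H M)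
    (hδH : δ H = β₅ • wedge K M - (β₆ + α) • wedge P H +
              β₃ • wedge P M + (β₄ - ξ) • wedge H M)
    (hδP : δ P = β₄ • wedge P M + (β₆ + α) • wedge H M)
    (hδM : δ M = α • wedge P M) :
    (∀ X : L,
        TensorProduct.map δ LinearMap.id (δ X) +
          cyclicRot L (TensorProduct.map δ LinearMap.id (δ X)) +
          cyclicRot L (cyclicRot L (TensorProduct.map δ LinearMap.id (δ X))) = 0) ↔
      (α * β₅ = 0 ∧ β₆ * (β₆ + α) = 0 ∧ β₄ * (β₆ + α) = 0 ∧
        ν * (ξ - β₄) = 0 ∧ α * (ξ - β₄) - ν * β₅ = 0) := by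
  subst hbK hbH hbP hbM
  constructor
  · intro hco
    have e0 := hco (b 0)
    have e1 := hco (b 1)
    simp only [hδK, hδH, hδP, hδM, wedge, map_add, map_sub, map_smul,
      TensorProduct.map_tmul, LinearMap.id_coe, id_eq,
      TensorProduct.add_tmul, TensorProduct.sub_tmul,
      TensorProduct.tmul_add, TensorProduct.tmul_sub,
      TensorProduct.smul_tmul, TensorProduct.tmul_smul,
      cyclicRot_tmul, smul_sub, smul_add, smul_smul] at e0 e1
    have cK1 := congrArg (pairF (pairF (b.coord 0) (b.coord 1)) (b.coord 3)) e0
    have cK2 := congrArg (pairF (pairF (b.coord 1) (b.coord 2)) (b.coord 3)) e0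
    have cK3 := congrArg (pairF (pairF (b.coord 0) (b.coord 2)) (b.coord 3)) e0
    have cH1 := congrArg (pairF (pairF (b.coord 0) (b.coord 2)) (b.coord 3)) e1
    have cH2 := congrArg (pairF (pairF (b.coord 1) (b.coord 2)) (b.coord 3)) e1
    simp only [map_add, map_sub, map_smul, map_zero, pairF_tmul,
      Module.Basis.coord_apply, Module.Basis.repr_self, Finsupp.single_apply, smul_eq_mul,
      Fin.isValue, Fin.reduceEq, reduceIte, mul_one, mul_zero, one_mul, zero_mul,
      add_zero, zero_add, sub_zero, zero_sub, neg_zero, neg_neg] at cK1 cK2 cK3 cH1 cH2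
    ring_nf at cK1 cK2 cK3 cH1 cH2
    refine ⟨?_, ?_, ?_, ?_, ?_⟩
    · first
        | linear_combination cH1 / 2 | linear_combination -cH1 / 2
        | linear_combination cH1 | linear_combination -cH1
    · first | linear_combination cK1 | linear_combination -cK1
    · first
        | linear_combination (cK3 - cH2) / 2 | linear_combination (cH2 - cK3) / 2
        | linear_combination (cK3 + cH2) / 2 | linear_combination (-cK3 - cH2) / 2
    · first
        | linear_combination cK2 / 2 | linear_combination -cK2 / 2
        | linear_combination cK2 | linear_combination -cK2
    · first
        | linear_combination (cK3 - cH2) / 2 | linear_combination (cH2 - cK3) / 2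
        | linear_combination (cK3 + cH2) / 2 | linear_combination (-cK3 - cH2) / 2
  · rintro ⟨h1, h2, h3, h4, h5⟩
    set G : L →ₗ[ℝ] (L ⊗[ℝ] L) ⊗[ℝ] L :=
      (LinearMap.id + (cyclicRot L).toLinearMap +
        (cyclicRot L).toLinearMap ∘ₗ (cyclicRot L).toLinearMap) ∘ₗ
        (TensorProduct.map δ LinearMap.id) ∘ₗ δ with hGdef
    have case0 : G (b 0) = 0 := by
      simp only [hGdef, LinearMap.comp_apply, LinearMap.add_apply,
        LinearMap.id_apply, LinearEquiv.coe_coe,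
        hδK, hδH, hδP, hδM, wedge, map_add, map_sub, map_smul,
        TensorProduct.map_tmul, LinearMap.id_coe, id_eq,
        TensorProduct.add_tmul, TensorProduct.sub_tmul,
        TensorProduct.tmul_add, TensorProduct.tmul_sub,
        TensorProduct.smul_tmul, TensorProduct.tmul_smul,
        cyclicRot_tmul, smul_sub, smul_add, smul_smul]
      match_scalars <;>
      first
        | ring1
        | linear_combination h2 | linear_combination -h2
        | linear_combination 2*h4 | linear_combination -2*h4
        | linear_combination h5+h3 | linear_combination -h5-h3
        | linear_combination 2*h1 | linear_combination -2*h1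
        | linear_combination h5-h3 | linear_combination h3-h5
    have case1 : G (b 1) = 0 := by
      simp only [hGdef, LinearMap.comp_apply, LinearMap.add_apply,
        LinearMap.id_apply, LinearEquiv.coe_coe,
        hδK, hδH, hδP, hδM, wedge, map_add, map_sub, map_smul,
        TensorProduct.map_tmul, LinearMap.id_coe, id_eq,
        TensorProduct.add_tmul, TensorProduct.sub_tmul,
        TensorProduct.tmul_add, TensorProduct.tmul_sub,
        TensorProduct.smul_tmul, TensorProduct.tmul_smul,
        cyclicRot_tmul, smul_sub, smul_add, smul_smul]
      match_scalars <;>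
      first
        | ring1
        | linear_combination h2 | linear_combination -h2
        | linear_combination 2*h4 | linear_combination -2*h4
        | linear_combination h5+h3 | linear_combination -h5-h3
        | linear_combination 2*h1 | linear_combination -2*h1
        | linear_combination h5-h3 | linear_combination h3-h5
    have case2 : G (b 2) = 0 := by
      simp only [hGdef, LinearMap.comp_apply, LinearMap.add_apply,
        LinearMap.id_apply, LinearEquiv.coe_coe,
        hδK, hδH, hδP, hδM, wedge, map_add, map_sub, map_smul,
        TensorProduct.map_tmul, LinearMap.id_coe, id_eq,
        TensorProduct.add_tmul, TensorProduct.sub_tmul,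
        TensorProduct.tmul_add, TensorProduct.tmul_sub,
        TensorProduct.smul_tmul, TensorProduct.tmul_smul,
        cyclicRot_tmul, smul_sub, smul_add, smul_smul]
      match_scalars <;>
      first
        | ring1
        | linear_combination h2 | linear_combination -h2
        | linear_combination 2*h4 | linear_combination -2*h4
        | linear_combination h5+h3 | linear_combination -h5-h3
        | linear_combination 2*h1 | linear_combination -2*h1
        | linear_combination h5-h3 | linear_combination h3-h5
    have case3 : G (b 3) = 0 := by
      simp only [hGdef, LinearMap.comp_apply, LinearMap.add_apply,
        LinearMap.id_apply, LinearEquiv.coe_coe,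
        hδK, hδH, hδP, hδM, wedge, map_add, map_sub, map_smul,
        TensorProduct.map_tmul, LinearMap.id_coe, id_eq,
        TensorProduct.add_tmul, TensorProduct.sub_tmul,
        TensorProduct.tmul_add, TensorProduct.tmul_sub,
        TensorProduct.smul_tmul, TensorProduct.tmul_smul,
        cyclicRot_tmul, smul_sub, smul_add, smul_smul]
      match_scalars <;>
      first
        | ring1
        | linear_combination h2 | linear_combination -h2
        | linear_combination 2*h4 | linear_combination -2*h4
        | linear_combination h5+h3 | linear_combination -h5-h3
        | linear_combination 2*h1 | linear_combination -2*h1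
        | linear_combination h5-h3 | linear_combination h3-h5
    have hG0 : G = 0 := by
      apply b.ext
      intro i
      fin_cases i
      exacts [case0, case1, case2, case3]
    intro X
    have : TensorProduct.map δ LinearMap.id (δ X) +
        cyclicRot L (TensorProduct.map δ LinearMap.id (δ X)) +
        cyclicRot L (cyclicRot L (TensorProduct.map δ LinearMap.id (δ X))) = G X := by
      simp [hGdef]
    rw [this, hG0, LinearMap.zero_apply]
end

section
/- A tuple (α, ξ, ν, β₄, β₅, β₆) ∈ ℝ⁶ satisfies the system α β₅ = 0, β₆(β₆+α) = 0, β₄(β₆+α) = 0, ν(ξ−β₄) = 0, α(ξ−β₄) − ν β₅ = 0 if and only if it belongs to exactly one of the following four pairwise-disjoint families: (Ia) α = 0, β₆ = 0, ν = 0 (with ξ, β₄, β₅ arbitrary); (Ib) α = 0, β₆ = 0, ν ≠ 0, β₄ = ξ, β₅ = 0; (IIa) α ≠ 0, β₅ = 0, β₆ = 0, ξ = 0, β₄ = 0 (with ν arbitrary); (IIb) α ≠ 0, β₅ = 0, β₆ = −α, β₄ = ξ (with ν arbitrary). -/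
/-- Family Ia: `α = 0`, `β₆ = 0`, `ν = 0`. -/
def famIa (α ξ ν β₄ β₅ β₆ : ℝ) : Prop := α = 0 ∧ β₆ = 0 ∧ ν = 0

/-- Family Ib: `α = 0`, `β₆ = 0`, `ν ≠ 0`, `β₄ = ξ`, `β₅ = 0`. -/
def famIb (α ξ ν β₄ β₅ β₆ : ℝ) : Prop := α = 0 ∧ β₆ = 0 ∧ ν ≠ 0 ∧ β₄ = ξ ∧ β₅ = 0

/-- Family IIa: `α ≠ 0`, `β₅ = 0`, `β₆ = 0`, `ξ = 0`, `β₄ = 0`. -/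
def famIIa (α ξ ν β₄ β₅ β₆ : ℝ) : Prop := α ≠ 0 ∧ β₅ = 0 ∧ β₆ = 0 ∧ ξ = 0 ∧ β₄ = 0

/-- Family IIb: `α ≠ 0`, `β₅ = 0`, `β₆ = −α`, `β₄ = ξ`. -/
def famIIb (α ξ ν β₄ β₅ β₆ : ℝ) : Prop := α ≠ 0 ∧ β₅ = 0 ∧ β₆ = -α ∧ β₄ = ξ

lemma key (α ξ ν β₄ β₅ β₆ : ℝ) :
    (α * β₅ = 0 ∧ β₆ * (β₆ + α) = 0 ∧ β₄ * (β₆ + α) = 0 ∧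
        ν * (ξ - β₄) = 0 ∧ α * (ξ - β₄) - ν * β₅ = 0) ↔
    (famIa α ξ ν β₄ β₅ β₆ ∨ famIb α ξ ν β₄ β₅ β₆ ∨ famIIa α ξ ν β₄ β₅ β₆ ∨
      famIIb α ξ ν β₄ β₅ β₆) := by
  unfold famIa famIb famIIa famIIb
  constructor
  · rintro ⟨h1, h2, h3, h4, h5⟩
    by_cases hα : α = 0
    · subst hα
      have h6 : β₆ = 0 := by nlinarith [sq_nonneg β₆]
      by_cases hν : ν = 0
      · exact Or.inl ⟨rfl, h6, hν⟩
      · have h4' : ξ - β₄ = 0 := by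
          rcases mul_eq_zero.mp h4 with h | h
          · exact absurd h hν
          · exact h
        have h5' : β₅ = 0 := by
          have : ν * β₅ = 0 := by linarith
          rcases mul_eq_zero.mp this with h | h
          · exact absurd h hν
          · exact h
        exact Or.inr (Or.inl ⟨rfl, h6, hν, by linarith, h5'⟩)
    · have h5' : β₅ = 0 := by
        rcases mul_eq_zero.mp h1 with h | h
        · exact absurd h hα
        · exact h
      have hxb : ξ - β₄ = 0 := by
        have : α * (ξ - β₄) = 0 := by nlinarith
        rcases mul_eq_zero.mp this with h | h
        · exact absurd h hα
        · exact h
      by_cases h6 : β₆ + α = 0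
      · exact Or.inr (Or.inr (Or.inr ⟨hα, h5', by linarith, by linarith⟩))
      · have hβ6 : β₆ = 0 := by
          rcases mul_eq_zero.mp h2 with h | h
          · exact h
          · exact absurd h h6
        have hβ4 : β₄ = 0 := by
          rcases mul_eq_zero.mp h3 with h | h
          · exact h
          · exact absurd h h6
        exact Or.inr (Or.inr (Or.inl ⟨hα, h5', hβ6, by linarith, hβ4⟩))
  · rintro (⟨hα, h6, hν⟩ | ⟨hα, h6, hν, h4, h5⟩ | ⟨hα, h5, h6, hξ, h4⟩ |
      ⟨hα, h5, h6, h4⟩) <;> subst_vars <;> norm_num <;> ring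

/-- The solutions of the system (bg) split into four pairwise-disjoint families:
a tuple solves the system iff it belongs to exactly one of the families
Ia, Ib, IIa, IIb. -/
theorem galilei_bialgebra_four_families (α ξ ν β₄ β₅ β₆ : ℝ) :
    ((α * β₅ = 0 ∧ β₆ * (β₆ + α) = 0 ∧ β₄ * (β₆ + α) = 0 ∧
        ν * (ξ - β₄) = 0 ∧ α * (ξ - β₄) - ν * β₅ = 0) ↔
      ((famIa α ξ ν β₄ β₅ β₆ ∧ ¬ famIb α ξ ν β₄ β₅ β₆ ∧
          ¬ famIIa α ξ ν β₄ β₅ β₆ ∧ ¬ famIIb α ξ ν β₄ β₅ β₆) ∨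
        (¬ famIa α ξ ν β₄ β₅ β₆ ∧ famIb α ξ ν β₄ β₅ β₆ ∧
          ¬ famIIa α ξ ν β₄ β₅ β₆ ∧ ¬ famIIb α ξ ν β₄ β₅ β₆) ∨
        (¬ famIa α ξ ν β₄ β₅ β₆ ∧ ¬ famIb α ξ ν β₄ β₅ β₆ ∧
          famIIa α ξ ν β₄ β₅ β₆ ∧ ¬ famIIb α ξ ν β₄ β₅ β₆) ∨
        (¬ famIa α ξ ν β₄ β₅ β₆ ∧ ¬ famIb α ξ ν β₄ β₅ β₆ ∧
          ¬ famIIa α ξ ν β₄ β₅ β₆ ∧ famIIb α ξ ν β₄ β₅ β₆))) ∧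
    (¬ (famIa α ξ ν β₄ β₅ β₆ ∧ famIb α ξ ν β₄ β₅ β₆)) ∧
    (¬ (famIa α ξ ν β₄ β₅ β₆ ∧ famIIa α ξ ν β₄ β₅ β₆)) ∧
    (¬ (famIa α ξ ν β₄ β₅ β₆ ∧ famIIb α ξ ν β₄ β₅ β₆)) ∧
    (¬ (famIb α ξ ν β₄ β₅ β₆ ∧ famIIa α ξ ν β₄ β₅ β₆)) ∧
    (¬ (famIb α ξ ν β₄ β₅ β₆ ∧ famIIb α ξ ν β₄ β₅ β₆)) ∧
    (¬ (famIIa α ξ ν β₄ β₅ β₆ ∧ famIIb α ξ ν β₄ β₅ β₆)) := by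
  have disj1 : ¬ (famIa α ξ ν β₄ β₅ β₆ ∧ famIb α ξ ν β₄ β₅ β₆) := by
    rintro ⟨⟨_, _, h⟩, ⟨_, _, h', _⟩⟩; exact h' h
  have disj2 : ¬ (famIa α ξ ν β₄ β₅ β₆ ∧ famIIa α ξ ν β₄ β₅ β₆) := by
    rintro ⟨⟨h, _, _⟩, ⟨h', _⟩⟩; exact h' h
  have disj3 : ¬ (famIa α ξ ν β₄ β₅ β₆ ∧ famIIb α ξ ν β₄ β₅ β₆) := by
    rintro ⟨⟨h, _, _⟩, ⟨h', _⟩⟩; exact h' h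
  have disj4 : ¬ (famIb α ξ ν β₄ β₅ β₆ ∧ famIIa α ξ ν β₄ β₅ β₆) := by
    rintro ⟨⟨h, _, _, _⟩, ⟨h', _⟩⟩; exact h' h
  have disj5 : ¬ (famIb α ξ ν β₄ β₅ β₆ ∧ famIIb α ξ ν β₄ β₅ β₆) := by
    rintro ⟨⟨h, _, _, _⟩, ⟨h', _⟩⟩; exact h' h
  have disj6 : ¬ (famIIa α ξ ν β₄ β₅ β₆ ∧ famIIb α ξ ν β₄ β₅ β₆) := by
    rintro ⟨⟨hα, _, h6, _⟩, ⟨_, _, h6', _⟩⟩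
    apply hα; rw [h6] at h6'; linarith
  refine ⟨(key α ξ ν β₄ β₅ β₆).trans ?_, disj1, disj2, disj3, disj4, disj5, disj6⟩
  constructor
  · rintro (h | h | h | h)
    · exact Or.inl ⟨h, fun h' => disj1 ⟨h, h'⟩, fun h' => disj2 ⟨h, h'⟩,
        fun h' => disj3 ⟨h, h'⟩⟩
    · exact Or.inr (Or.inl ⟨fun h' => disj1 ⟨h', h⟩, h, fun h' => disj4 ⟨h, h'⟩,
        fun h' => disj5 ⟨h, h'⟩⟩)
    · exact Or.inr (Or.inr (Or.inl ⟨fun h' => disj2 ⟨h', h⟩, fun h' => disj4 ⟨h', h⟩,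
        h, fun h' => disj6 ⟨h, h'⟩⟩))
    · exact Or.inr (Or.inr (Or.inr ⟨fun h' => disj3 ⟨h', h⟩, fun h' => disj5 ⟨h', h⟩,
        fun h' => disj6 ⟨h', h⟩, h⟩))
  · rintro (⟨h, _⟩ | ⟨_, h, _⟩ | ⟨_, _, h, _⟩ | ⟨_, _, _, h⟩)
    · exact Or.inl h
    · exact Or.inr (Or.inl h)
    · exact Or.inr (Or.inr (Or.inl h))
    · exact Or.inr (Or.inr (Or.inr h))
end

section
/- For arbitrary real numbers λ₁, λ₂, λ₃, λ₄, λ₅, the linear map 𝒪 : 𝔤 → 𝔤 defined on the basis by 𝒪(K) = K + λ₁ H + λ₂ P + λ₃ M, 𝒪(H) = H + λ₄ P + λ₅ M, 𝒪(P) = P + λ₄ M, 𝒪(M) = M is a Lie algebra automorphism of 𝔤. -/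
/-- For arbitrary real `λ₁,…,λ₅`, the linear map determined on the basis by
`𝒪(K) = K + λ₁H + λ₂P + λ₃M`, `𝒪(H) = H + λ₄P + λ₅M`, `𝒪(P) = P + λ₄M`,
`𝒪(M) = M` is a Lie algebra automorphism of the (1+1) extended Galilei algebra. -/
theorem galilei_automorphism
    {L : Type} [LieRing L] [LieAlgebra ℝ L]
    (K H P M : L) (b : Module.Basis (Fin 4) ℝ L)
    (hbK : b 0 = K) (hbH : b 1 = H) (hbP : b 2 = P) (hbM : b 3 = M)
    (hKH : ⁅K, H⁆ = P) (hKP : ⁅K, P⁆ = M) (hHP : ⁅H, P⁆ = (0 : L))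
    (hMK : ⁅M, K⁆ = (0 : L)) (hMH : ⁅M, H⁆ = (0 : L)) (hMP : ⁅M, P⁆ = (0 : L))
    (l₁ l₂ l₃ l₄ l₅ : ℝ) (f : L →ₗ[ℝ] L)
    (hfK : f K = K + l₁ • H + l₂ • P + l₃ • M)
    (hfH : f H = H + l₄ • P + l₅ • M)
    (hfP : f P = P + l₄ • M)
    (hfM : f M = M) :
    Function.Bijective f ∧ ∀ x y : L, f ⁅x, y⁆ = ⁅f x, f y⁆ := by
  -- derived brackets
  have hHK : ⁅H, K⁆ = -P := by rw [← lie_skew, hKH]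
  have hPK : ⁅P, K⁆ = -M := by rw [← lie_skew, hKP]
  have hPH : ⁅P, H⁆ = (0 : L) := by rw [← lie_skew, hHP, neg_zero]
  have hKM : ⁅K, M⁆ = (0 : L) := by rw [← lie_skew, hMK, neg_zero]
  have hHM : ⁅H, M⁆ = (0 : L) := by rw [← lie_skew, hMH, neg_zero]
  have hPM : ⁅P, M⁆ = (0 : L) := by rw [← lie_skew, hMP, neg_zero]
  -- bracket preservation
  have hbr : ∀ x y : L, f ⁅x, y⁆ = ⁅f x, f y⁆ := by
    letI : LieRing (Module.End ℝ L) := LieRing.ofAssociativeRing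
    letI : LieAlgebra ℝ (Module.End ℝ L) := LieAlgebra.ofAssociativeAlgebra
    let adL : L →ₗ[ℝ] L →ₗ[ℝ] L := (LieAlgebra.ad ℝ L : L →ₗ⁅ℝ⁆ Module.End ℝ L).toLinearMap
    have hB : adL.compr₂ f = ((adL ∘ₗ f).compl₂ f) := by
      apply LinearMap.ext_basis b b
      intro i j
      fin_cases i <;> fin_cases j <;>
        simp only [Fin.zero_eta, Fin.mk_one, Fin.reduceFinMk,
          LinearMap.compr₂_apply, LinearMap.compl₂_apply, LinearMap.comp_apply,
          hbK, hbH, hbP, hbM, adL, LieHom.coe_toLinearMap, LieAlgebra.ad_apply,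
          hfK, hfH, hfP, hfM, lie_add, add_lie, lie_smul, smul_lie, lie_self,
          hKH, hKP, hHP, hMK, hMH, hMP, hHK, hPK, hPH, hKM, hHM, hPM,
          smul_zero, zero_add, add_zero, smul_neg, smul_smul, map_add, map_smul,
          map_zero, map_neg, neg_zero, LinearMap.add_apply, LinearMap.smul_apply, LinearMap.zero_apply, LinearMap.neg_apply] <;>
        first | rfl | abel
    intro x y
    have := LinearMap.congr_fun (LinearMap.congr_fun hB x) y
    simpa [adL, LinearMap.compr₂_apply, LinearMap.compl₂_apply] using this
  -- surjectivity
  have hM' : M ∈ LinearMap.range f := ⟨M, hfM⟩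
  have hP' : P ∈ LinearMap.range f := by
    have h1 : P + l₄ • M ∈ LinearMap.range f := ⟨P, hfP⟩
    have := sub_mem h1 (Submodule.smul_mem _ l₄ hM')
    simpa using this
  have hH' : H ∈ LinearMap.range f := by
    have h1 : H + l₄ • P + l₅ • M ∈ LinearMap.range f := ⟨H, hfH⟩
    have := sub_mem (sub_mem h1 (Submodule.smul_mem _ l₅ hM')) (Submodule.smul_mem _ l₄ hP')
    simpa [add_sub_cancel_right, sub_sub] using this
  have hK' : K ∈ LinearMap.range f := by
    have h1 : K + l₁ • H + l₂ • P + l₃ • M ∈ LinearMap.range f := ⟨K, hfK⟩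
    have := sub_mem (sub_mem (sub_mem h1 (Submodule.smul_mem _ l₃ hM'))
      (Submodule.smul_mem _ l₂ hP')) (Submodule.smul_mem _ l₁ hH')
    simpa [add_sub_cancel_right] using this
  have hsurj : Function.Surjective f := by
    rw [← LinearMap.range_eq_top, eq_top_iff, ← b.span_eq, Submodule.span_le]
    rintro x ⟨i, rfl⟩
    fin_cases i <;> simp only [Fin.zero_eta, Fin.mk_one, Fin.reduceFinMk, hbK, hbH, hbP, hbM] <;> assumption
  haveI : FiniteDimensional ℝ L := Module.Basis.finiteDimensional_of_finite b
  exact ⟨⟨(LinearMap.injective_iff_surjective).2 hsurj, hsurj⟩, hbr⟩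
end

section
/- Let r = a₁ K∧P + a₂ K∧M + a₃ K∧H + a₄ P∧M + a₅ P∧H + a₆ M∧H ∈ 𝔤⊗𝔤 with arbitrary real coefficients a₁, …, a₆. Then the Schouten bracket of r with itself equals [[r,r]] = −a₃² K∧P∧H + (a₁² − a₂a₃) K∧P∧M + a₁a₃ K∧H∧M + (a₁a₅ − a₃a₆) P∧H∧M, as an element of 𝔤⊗𝔤⊗𝔤 ⊂ U(𝔤)⊗U(𝔤)⊗U(𝔤). -/
open scoped TensorProduct

set_option maxHeartbeats 4000000
set_option synthInstance.maxHeartbeats 1000000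
noncomputable section

variable {L : Type} [LieRing L] [LieAlgebra ℝ L]

/-- The canonical embedding `ι : 𝔤 → U(𝔤)`. -/
def ue (x : L) : UniversalEnvelopingAlgebra ℝ L := UniversalEnvelopingAlgebra.ι ℝ x

/-- `ι(x)⊗ι(y)⊗ι(z) ∈ U(𝔤)⊗U(𝔤)⊗U(𝔤)`. -/
def t3 (x y z : L) :
    UniversalEnvelopingAlgebra ℝ L ⊗[ℝ] (UniversalEnvelopingAlgebra ℝ L ⊗[ℝ]
      UniversalEnvelopingAlgebra ℝ L) :=
  ue x ⊗ₜ[ℝ] (ue y ⊗ₜ[ℝ] ue z)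

/-- Full antisymmetrization `x∧y∧z = Σ_{σ∈S₃} sgn(σ) x_{σ(1)}⊗x_{σ(2)}⊗x_{σ(3)}`. -/
def w3 (x y z : L) :
    UniversalEnvelopingAlgebra ℝ L ⊗[ℝ] (UniversalEnvelopingAlgebra ℝ L ⊗[ℝ]
      UniversalEnvelopingAlgebra ℝ L) :=
  t3 x y z - t3 x z y + t3 y z x - t3 y x z + t3 z x y - t3 z y x

/-- `(x∧y)₁₂ = x⊗y⊗1 − y⊗x⊗1`. -/
def w12 (x y : L) :
    UniversalEnvelopingAlgebra ℝ L ⊗[ℝ] (UniversalEnvelopingAlgebra ℝ L ⊗[ℝ]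
      UniversalEnvelopingAlgebra ℝ L) :=
  ue x ⊗ₜ[ℝ] (ue y ⊗ₜ[ℝ] (1 : UniversalEnvelopingAlgebra ℝ L)) -
    ue y ⊗ₜ[ℝ] (ue x ⊗ₜ[ℝ] (1 : UniversalEnvelopingAlgebra ℝ L))

/-- `(x∧y)₁₃ = x⊗1⊗y − y⊗1⊗x`. -/
def w13 (x y : L) :
    UniversalEnvelopingAlgebra ℝ L ⊗[ℝ] (UniversalEnvelopingAlgebra ℝ L ⊗[ℝ]
      UniversalEnvelopingAlgebra ℝ L) :=
  ue x ⊗ₜ[ℝ] ((1 : UniversalEnvelopingAlgebra ℝ L) ⊗ₜ[ℝ] ue y) -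
    ue y ⊗ₜ[ℝ] ((1 : UniversalEnvelopingAlgebra ℝ L) ⊗ₜ[ℝ] ue x)

/-- `(x∧y)₂₃ = 1⊗x⊗y − 1⊗y⊗x`. -/
def w23 (x y : L) :
    UniversalEnvelopingAlgebra ℝ L ⊗[ℝ] (UniversalEnvelopingAlgebra ℝ L ⊗[ℝ]
      UniversalEnvelopingAlgebra ℝ L) :=
  (1 : UniversalEnvelopingAlgebra ℝ L) ⊗ₜ[ℝ] (ue x ⊗ₜ[ℝ] ue y) -
    (1 : UniversalEnvelopingAlgebra ℝ L) ⊗ₜ[ℝ] (ue y ⊗ₜ[ℝ] ue x)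

lemma ue_comm (x y : L) :
    ue x * ue y - ue y * ue x = ue ⁅x, y⁆ := by
  letI : LieRing (UniversalEnvelopingAlgebra ℝ L) := LieRing.ofAssociativeRing
  have h := (UniversalEnvelopingAlgebra.ι ℝ (L := L)).map_lie x y
  rw [Ring.lie_def] at h
  exact h.symm

/-- The Schouten bracket of `r = a₁K∧P + a₂K∧M + a₃K∧H + a₄P∧M + a₅P∧H + a₆M∧H`
with itself in `U(𝔤)⊗U(𝔤)⊗U(𝔤)` equals formula (db). -/
theorem galilei_schouten_bracket
    (K H P M : L) (b : Module.Basis (Fin 4) ℝ L)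
    (hbK : b 0 = K) (hbH : b 1 = H) (hbP : b 2 = P) (hbM : b 3 = M)
    (hKH : ⁅K, H⁆ = P) (hKP : ⁅K, P⁆ = M) (hHP : ⁅H, P⁆ = (0 : L))
    (hMK : ⁅M, K⁆ = (0 : L)) (hMH : ⁅M, H⁆ = (0 : L)) (hMP : ⁅M, P⁆ = (0 : L))
    (a₁ a₂ a₃ a₄ a₅ a₆ : ℝ) :
    ∀ r12 r13 r23 :
        UniversalEnvelopingAlgebra ℝ L ⊗[ℝ] (UniversalEnvelopingAlgebra ℝ L ⊗[ℝ]
          UniversalEnvelopingAlgebra ℝ L),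
      r12 = a₁ • w12 K P + a₂ • w12 K M + a₃ • w12 K H + a₄ • w12 P M +
          a₅ • w12 P H + a₆ • w12 M H →
      r13 = a₁ • w13 K P + a₂ • w13 K M + a₃ • w13 K H + a₄ • w13 P M +
          a₅ • w13 P H + a₆ • w13 M H →
      r23 = a₁ • w23 K P + a₂ • w23 K M + a₃ • w23 K H + a₄ • w23 P M +
          a₅ • w23 P H + a₆ • w23 M H →
      (r12 * r13 - r13 * r12) + (r12 * r23 - r23 * r12) + (r13 * r23 - r23 * r13) =
        (-(a₃ ^ 2)) • w3 K P H + (a₁ ^ 2 - a₂ * a₃) • w3 K P M +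
          (a₁ * a₃) • w3 K H M + (a₁ * a₅ - a₃ * a₆) • w3 P H M := by
  intro r12 r13 r23 h12 h13 h23
  subst h12 h13 h23
  have cHK : ue H * ue K = ue K * ue H - ue P := by
    have h := ue_comm K H; rw [hKH] at h; rw [← h]; abel
  have cPK : ue P * ue K = ue K * ue P - ue M := by
    have h := ue_comm K P; rw [hKP] at h; rw [← h]; abel
  have cPH : ue P * ue H = ue H * ue P := by
    have h := ue_comm H P; rw [hHP] at h
    have : ue (0 : L) = 0 := by simp [ue]
    rw [this] at h; exact (sub_eq_zero.mp h).symm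
  have cMK : ue M * ue K = ue K * ue M := by
    have h := ue_comm M K; rw [hMK] at h
    have : ue (0 : L) = 0 := by simp [ue]
    exact sub_eq_zero.mp (h.trans this)
  have cMH : ue M * ue H = ue H * ue M := by
    have h := ue_comm M H; rw [hMH] at h
    have : ue (0 : L) = 0 := by simp [ue]
    exact sub_eq_zero.mp (h.trans this)
  have cMP : ue M * ue P = ue P * ue M := by
    have h := ue_comm M P; rw [hMP] at h
    have : ue (0 : L) = 0 := by simp [ue]
    exact sub_eq_zero.mp (h.trans this)
  simp only [w12, w13, w23, w3, t3,
    smul_add, smul_sub, add_mul, mul_add, sub_mul, mul_sub,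
    smul_mul_assoc, mul_smul_comm, smul_smul,
    Algebra.TensorProduct.tmul_mul_tmul, one_mul, mul_one,
    cHK, cPK, cPH, cMK, cMH, cMP,
    TensorProduct.tmul_sub, TensorProduct.sub_tmul,
    TensorProduct.tmul_add, TensorProduct.add_tmul]
  module
end
end

section
/- An element η ∈ 𝔤⊗𝔤 is Ad⊗²-invariant, i.e. [X⊗1 + 1⊗X, η] = 0 in U(𝔤)⊗U(𝔤) for all X ∈ 𝔤, if and only if η lies in the real linear span of the three elements P⊗P − M⊗H − H⊗M, M⊗M, and P⊗M − M⊗P. -/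
open scoped TensorProduct

noncomputable section

variable {L : Type} [LieRing L] [LieAlgebra ℝ L]

/-- The embedding `𝔤⊗𝔤 → U(𝔤)⊗U(𝔤)`. -/
def emb2 : L ⊗[ℝ] L →ₗ[ℝ]
    UniversalEnvelopingAlgebra ℝ L ⊗[ℝ] UniversalEnvelopingAlgebra ℝ L :=
  letI : LieRing (UniversalEnvelopingAlgebra ℝ L) := LieRing.ofAssociativeRing
  letI : LieAlgebra ℝ (UniversalEnvelopingAlgebra ℝ L) := LieAlgebra.ofAssociativeAlgebra
  TensorProduct.map (UniversalEnvelopingAlgebra.ι ℝ (L := L)).toLinearMap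
    (UniversalEnvelopingAlgebra.ι ℝ (L := L)).toLinearMap

/-! ### Auxiliary definitions and lemmas -/

instance matLieRing : LieRing (Matrix (Fin 4) (Fin 4) ℝ) := LieRing.ofAssociativeRing

/-- The adjoint action of `X` on `L ⊗ L`. -/
def gD (X : L) : L ⊗[ℝ] L →ₗ[ℝ] L ⊗[ℝ] L :=
  LinearMap.rTensor L ((LieAlgebra.ad ℝ L) X) + LinearMap.lTensor L ((LieAlgebra.ad ℝ L) X)

lemma gD_tmul (X u v : L) : gD X (u ⊗ₜ[ℝ] v) = ⁅X,u⁆ ⊗ₜ[ℝ] v + u ⊗ₜ[ℝ] ⁅X,v⁆ := by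
  simp [gD]

lemma emb2_tmul (u v : L) : emb2 (u ⊗ₜ[ℝ] v) = ue u ⊗ₜ[ℝ] ue v := rfl

lemma comm_eq (X : L) (η : L ⊗[ℝ] L) :
    (ue X ⊗ₜ[ℝ] (1 : UniversalEnvelopingAlgebra ℝ L) +
        (1 : UniversalEnvelopingAlgebra ℝ L) ⊗ₜ[ℝ] ue X) * emb2 η -
      emb2 η * (ue X ⊗ₜ[ℝ] (1 : UniversalEnvelopingAlgebra ℝ L) +
        (1 : UniversalEnvelopingAlgebra ℝ L) ⊗ₜ[ℝ] ue X) = emb2 (gD X η) := by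
  induction η using TensorProduct.induction_on with
  | zero => simp
  | tmul u v =>
      rw [gD_tmul, map_add, emb2_tmul, emb2_tmul, emb2_tmul]
      have h1 : ue ⁅X, u⁆ = ue X * ue u - ue u * ue X := by
        letI : LieRing (UniversalEnvelopingAlgebra ℝ L) := LieRing.ofAssociativeRing
        show (UniversalEnvelopingAlgebra.ι ℝ) ⁅X, u⁆ = _
        rw [LieHom.map_lie, Ring.lie_def]; rfl
      have h2 : ue ⁅X, v⁆ = ue X * ue v - ue v * ue X := by
        letI : LieRing (UniversalEnvelopingAlgebra ℝ L) := LieRing.ofAssociativeRing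
        show (UniversalEnvelopingAlgebra.ι ℝ) ⁅X, v⁆ = _
        rw [LieHom.map_lie, Ring.lie_def]; rfl
      rw [h1, h2]
      simp only [add_mul, mul_add, Algebra.TensorProduct.tmul_mul_tmul, one_mul, mul_one,
        TensorProduct.sub_tmul, TensorProduct.tmul_sub]
      abel
  | add x y hx hy =>
      rw [map_add, map_add, map_add, ← hx, ← hy]
      noncomm_ring

/-- A faithful matrix representation of the extended Galilei algebra. -/
def gMat : Fin 4 → Matrix (Fin 4) (Fin 4) ℝ :=
  ![Matrix.single 0 1 1 + Matrix.single 1 2 1,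
    Matrix.single 2 3 1,
    Matrix.single 1 3 1,
    Matrix.single 0 3 1]

lemma mlie01 : ⁅gMat 0, gMat 1⁆ = (gMat 2 : Matrix (Fin 4) (Fin 4) ℝ) := by
  rw [Ring.lie_def]; ext a c
  fin_cases a <;> fin_cases c <;>
    simp [gMat, Matrix.mul_apply, Matrix.single, Fin.sum_univ_four]

lemma mlie02 : ⁅gMat 0, gMat 2⁆ = (gMat 3 : Matrix (Fin 4) (Fin 4) ℝ) := by
  rw [Ring.lie_def]; ext a c
  fin_cases a <;> fin_cases c <;>
    simp [gMat, Matrix.mul_apply, Matrix.single, Fin.sum_univ_four]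

lemma mlie03 : ⁅gMat 0, gMat 3⁆ = (0 : Matrix (Fin 4) (Fin 4) ℝ) := by
  rw [Ring.lie_def]; ext a c
  fin_cases a <;> fin_cases c <;>
    simp [gMat, Matrix.mul_apply, Matrix.single, Fin.sum_univ_four]

lemma mlie12 : ⁅gMat 1, gMat 2⁆ = (0 : Matrix (Fin 4) (Fin 4) ℝ) := by
  rw [Ring.lie_def]; ext a c
  fin_cases a <;> fin_cases c <;>
    simp [gMat, Matrix.mul_apply, Matrix.single, Fin.sum_univ_four]

lemma mlie13 : ⁅gMat 1, gMat 3⁆ = (0 : Matrix (Fin 4) (Fin 4) ℝ) := by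
  rw [Ring.lie_def]; ext a c
  fin_cases a <;> fin_cases c <;>
    simp [gMat, Matrix.mul_apply, Matrix.single, Fin.sum_univ_four]

lemma mlie23 : ⁅gMat 2, gMat 3⁆ = (0 : Matrix (Fin 4) (Fin 4) ℝ) := by
  rw [Ring.lie_def]; ext a c
  fin_cases a <;> fin_cases c <;>
    simp [gMat, Matrix.mul_apply, Matrix.single, Fin.sum_univ_four]

lemma gMat_lie (K H P M : L) (b : Module.Basis (Fin 4) ℝ L)
    (hbK : b 0 = K) (hbH : b 1 = H) (hbP : b 2 = P) (hbM : b 3 = M)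
    (hKH : ⁅K, H⁆ = P) (hKP : ⁅K, P⁆ = M) (hHP : ⁅H, P⁆ = (0 : L))
    (hMK : ⁅M, K⁆ = (0 : L)) (hMH : ⁅M, H⁆ = (0 : L)) (hMP : ⁅M, P⁆ = (0 : L))
    (i j : Fin 4) :
    ⁅gMat i, gMat j⁆ = (b.constr ℝ gMat) ⁅b i, b j⁆ := by
  have tbl : ∀ k, (b.constr ℝ gMat) (b k) = gMat k := fun k => b.constr_basis ℝ gMat k
  have l01 : ⁅b 0, b 1⁆ = b 2 := by rw [hbK, hbH, hKH, hbP]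
  have l02 : ⁅b 0, b 2⁆ = b 3 := by rw [hbK, hbP, hKP, hbM]
  have l03 : ⁅b 0, b 3⁆ = (0 : L) := by rw [hbK, hbM, ← lie_skew, hMK, neg_zero]
  have l12 : ⁅b 1, b 2⁆ = (0 : L) := by rw [hbH, hbP, hHP]
  have l13 : ⁅b 1, b 3⁆ = (0 : L) := by rw [hbH, hbM, ← lie_skew, hMH, neg_zero]
  have l23 : ⁅b 2, b 3⁆ = (0 : L) := by rw [hbP, hbM, ← lie_skew, hMP, neg_zero]
  have fc : ∀ (k : Fin 4), k = 0 ∨ k = 1 ∨ k = 2 ∨ k = 3 := by decide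
  rcases fc i with rfl | rfl | rfl | rfl <;> rcases fc j with rfl | rfl | rfl | rfl
  · rw [lie_self, lie_self, map_zero]
  · rw [l01, tbl]; exact mlie01
  · rw [l02, tbl]; exact mlie02
  · rw [l03, map_zero]; exact mlie03
  · have h : ⁅b 1, b 0⁆ = -(b 2) := by rw [← lie_skew, l01]
    rw [h, map_neg, tbl, ← lie_skew, mlie01]
  · rw [lie_self, lie_self, map_zero]
  · rw [l12, map_zero]; exact mlie12
  · rw [l13, map_zero]; exact mlie13
  · have h : ⁅b 2, b 0⁆ = -(b 3) := by rw [← lie_skew, l02]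
    rw [h, map_neg, tbl, ← lie_skew, mlie02]
  · have h : ⁅b 2, b 1⁆ = (0 : L) := by rw [← lie_skew, l12, neg_zero]
    rw [h, map_zero, ← lie_skew, mlie12, neg_zero]
  · rw [lie_self, lie_self, map_zero]
  · rw [l23, map_zero]; exact mlie23
  · have h : ⁅b 3, b 0⁆ = (0 : L) := by rw [← lie_skew, l03, neg_zero]
    rw [h, map_zero, ← lie_skew, mlie03, neg_zero]
  · have h : ⁅b 3, b 1⁆ = (0 : L) := by rw [← lie_skew, l13, neg_zero]
    rw [h, map_zero, ← lie_skew, mlie13, neg_zero]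
  · have h : ⁅b 3, b 2⁆ = (0 : L) := by rw [← lie_skew, l23, neg_zero]
    rw [h, map_zero, ← lie_skew, mlie23, neg_zero]
  · rw [lie_self, lie_self, map_zero]

lemma constr_inj (b : Module.Basis (Fin 4) ℝ L) : Function.Injective (b.constr ℝ gMat) := by
  rw [← LinearMap.ker_eq_bot, LinearMap.ker_eq_bot']
  intro x hx
  have hxr : x = ∑ i : Fin 4, b.repr x i • b i := (b.sum_repr x).symm
  have h0 : ∑ i : Fin 4, b.repr x i • gMat i = 0 := by
    have := congrArg (b.constr ℝ gMat) hxr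
    rw [hx] at this
    rw [map_sum] at this
    simp only [map_smul, Module.Basis.constr_basis] at this
    exact this.symm
  rw [Fin.sum_univ_four] at h0
  have e0 := congrFun (congrFun h0 0) 1
  have e1 := congrFun (congrFun h0 2) 3
  have e2 := congrFun (congrFun h0 1) 3
  have e3 := congrFun (congrFun h0 0) 3
  simp [gMat, Matrix.single] at e0 e1 e2 e3
  rw [hxr, Fin.sum_univ_four, e0, e1, e2, e3]
  simp

lemma emb2_inj (g : L →ₗ⁅ℝ⁆ Matrix (Fin 4) (Fin 4) ℝ)
    (hg : Function.Injective g) (w : L ⊗[ℝ] L) (hw : emb2 w = 0) : w = 0 := by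
  set Φ := UniversalEnvelopingAlgebra.lift ℝ g with hΦ
  have key : (TensorProduct.map Φ.toLinearMap Φ.toLinearMap).comp emb2
      = TensorProduct.map g.toLinearMap g.toLinearMap := by
    rw [emb2, ← TensorProduct.map_comp]
    congr 1 <;>
    · ext x
      simp [hΦ, UniversalEnvelopingAlgebra.lift_ι_apply]
  have h1 : TensorProduct.map g.toLinearMap g.toLinearMap w = 0 := by
    rw [← key]
    simp [hw]
  obtain ⟨g', hg'⟩ := LinearMap.exists_leftInverse_of_injective g.toLinearMap
    (LinearMap.ker_eq_bot.mpr hg)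
  have : w = TensorProduct.map g' g' (TensorProduct.map g.toLinearMap g.toLinearMap w) := by
    rw [← LinearMap.comp_apply, ← TensorProduct.map_comp, hg', TensorProduct.map_id,
      LinearMap.id_apply]
  rw [this, h1, map_zero]

/-- An element `η ∈ 𝔤⊗𝔤` is `Ad⊗²`-invariant iff it lies in the span of
`P⊗P − M⊗H − H⊗M`, `M⊗M` and `P⊗M − M⊗P`. -/
theorem galilei_invariant_elements
    (K H P M : L) (b : Module.Basis (Fin 4) ℝ L)
    (hbK : b 0 = K) (hbH : b 1 = H) (hbP : b 2 = P) (hbM : b 3 = M)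
    (hKH : ⁅K, H⁆ = P) (hKP : ⁅K, P⁆ = M) (hHP : ⁅H, P⁆ = (0 : L))
    (hMK : ⁅M, K⁆ = (0 : L)) (hMH : ⁅M, H⁆ = (0 : L)) (hMP : ⁅M, P⁆ = (0 : L))
    (η : L ⊗[ℝ] L) :
    (∀ X : L,
        (ue X ⊗ₜ[ℝ] (1 : UniversalEnvelopingAlgebra ℝ L) +
            (1 : UniversalEnvelopingAlgebra ℝ L) ⊗ₜ[ℝ] ue X) * emb2 η -
          emb2 η *
            (ue X ⊗ₜ[ℝ] (1 : UniversalEnvelopingAlgebra ℝ L) +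
              (1 : UniversalEnvelopingAlgebra ℝ L) ⊗ₜ[ℝ] ue X) = 0) ↔
      η ∈ Submodule.span ℝ
        ({P ⊗ₜ[ℝ] P - M ⊗ₜ[ℝ] H - H ⊗ₜ[ℝ] M, M ⊗ₜ[ℝ] M,
          P ⊗ₜ[ℝ] M - M ⊗ₜ[ℝ] P} : Set (L ⊗[ℝ] L)) := by
  -- derived bracket relations
  have hHK : ⁅H, K⁆ = -P := by rw [← lie_skew, hKH]
  have hPK : ⁅P, K⁆ = -M := by rw [← lie_skew, hKP]
  have hPH : ⁅P, H⁆ = (0 : L) := by rw [← lie_skew, hHP, neg_zero]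
  have hKM : ⁅K, M⁆ = (0 : L) := by rw [← lie_skew, hMK, neg_zero]
  have hHM : ⁅H, M⁆ = (0 : L) := by rw [← lie_skew, hMH, neg_zero]
  have hPM : ⁅P, M⁆ = (0 : L) := by rw [← lie_skew, hMP, neg_zero]
  constructor
  · intro h
    -- build the faithful representation as a Lie algebra morphism
    set f := b.constr ℝ gMat with hf
    have hlie : ∀ x y : L, ⁅f x, f y⁆ = f ⁅x, y⁆ := by
      let B1 : L →ₗ[ℝ] L →ₗ[ℝ] Matrix (Fin 4) (Fin 4) ℝ :=
        LinearMap.mk₂ ℝ (fun x y => ⁅f x, f y⁆)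
          (fun m n p => by simp only [map_add, add_lie])
          (fun r m n => by simp only [map_smul, smul_lie])
          (fun m n p => by simp only [map_add, lie_add])
          (fun r m n => by simp only [map_smul, lie_smul])
      let B2 : L →ₗ[ℝ] L →ₗ[ℝ] Matrix (Fin 4) (Fin 4) ℝ :=
        LinearMap.mk₂ ℝ (fun x y => f ⁅x, y⁆)
          (fun m n p => by simp only [add_lie, map_add])
          (fun r m n => by simp only [smul_lie, map_smul])
          (fun m n p => by simp only [lie_add, map_add])
          (fun r m n => by simp only [lie_smul, map_smul])
      have hB : B1 = B2 := by
        apply b.ext; intro i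
        apply b.ext; intro j
        show ⁅f (b i), f (b j)⁆ = f ⁅b i, b j⁆
        rw [hf, Module.Basis.constr_basis, Module.Basis.constr_basis]
        exact gMat_lie K H P M b hbK hbH hbP hbM hKH hKP hHP hMK hMH hMP i j
      intro x y
      exact LinearMap.congr_fun (LinearMap.congr_fun hB x) y
    let g : L →ₗ⁅ℝ⁆ Matrix (Fin 4) (Fin 4) ℝ :=
      { toLinearMap := f, map_lie' := fun {x y} => (hlie x y).symm }
    have hginj : Function.Injective g := fun x y hxy => constr_inj b hxy
    -- invariance gives `gD X η = 0` for `X = K, H`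
    have hD : ∀ X : L, gD X η = 0 := by
      intro X
      exact emb2_inj g hginj _ ((comm_eq X η).symm.trans (h X))
    -- coordinates
    set B := Module.Basis.tensorProduct b b with hB
    set c : Fin 4 × Fin 4 → ℝ := fun p => B.repr η p with hc
    have hη : η = ∑ p : Fin 4 × Fin 4, c p • (b p.1 ⊗ₜ[ℝ] b p.2) := by
      conv_lhs => rw [← B.sum_repr η]
      refine Finset.sum_congr rfl fun p _ => ?_
      rw [hB, Module.Basis.tensorProduct_apply']
    rw [Fintype.sum_prod_type, Fin.sum_univ_four] at hη
    simp only [Fin.sum_univ_four, hbK, hbH, hbP, hbM] at hη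
    have lin := Fintype.linearIndependent_iff.mp B.linearIndependent
    -- equations from X = K
    have hsumK : ∑ p : Fin 4 × Fin 4,
        (!![0, 0, c (0,1), c (0,2);
            0, 0, c (1,1), c (1,2);
            c (1,0), c (1,1), c (1,2) + c (2,1), c (1,3) + c (2,2);
            c (2,0), c (2,1), c (2,2) + c (3,1), c (2,3) + c (3,2)] p.1 p.2) • B p = 0 := by
      rw [Fintype.sum_prod_type, Fin.sum_univ_four]
      simp only [Fin.sum_univ_four, hB, Module.Basis.tensorProduct_apply, hbK, hbH, hbP, hbM,
        Matrix.cons_val', Matrix.cons_val_zero, Matrix.cons_val_one, Matrix.head_cons,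
        Matrix.empty_val', Matrix.cons_val_fin_one, Matrix.head_fin_const, Matrix.cons_val_two,
        Matrix.tail_cons, Matrix.cons_val_three, Matrix.of_apply, Matrix.head_fin_const]
      rw [← hD K, hη]
      simp only [map_add, map_smul, gD_tmul, lie_self, hKH, hKP, hKM,
        TensorProduct.zero_tmul, TensorProduct.tmul_zero, add_zero, zero_add, smul_zero]
      module
    have eqK := lin _ hsumK
    -- equations from X = H
    have hsumH : ∑ p : Fin 4 × Fin 4,
        (!![0, 0, -c (0,0), 0;
            0, 0, -c (1,0), 0;
            -c (0,0), -c (0,1), -c (0,2) - c (2,0), -c (0,3);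
            0, 0, -c (3,0), 0] p.1 p.2) • B p = 0 := by
      rw [Fintype.sum_prod_type, Fin.sum_univ_four]
      simp only [Fin.sum_univ_four, hB, Module.Basis.tensorProduct_apply, hbK, hbH, hbP, hbM,
        Matrix.cons_val', Matrix.cons_val_zero, Matrix.cons_val_one, Matrix.head_cons,
        Matrix.empty_val', Matrix.cons_val_fin_one, Matrix.head_fin_const, Matrix.cons_val_two,
        Matrix.tail_cons, Matrix.cons_val_three, Matrix.of_apply, Matrix.head_fin_const]
      rw [← hD H, hη]
      simp only [map_add, map_smul, gD_tmul, lie_self, hHK, hHP, hHM,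
        TensorProduct.zero_tmul, TensorProduct.tmul_zero, add_zero, zero_add, smul_zero,
        TensorProduct.tmul_neg, TensorProduct.neg_tmul]
      module
    have eqH := lin _ hsumH
    -- extract the scalar equations
    have q01 : c (0,1) = 0 := by simpa using eqK (0,2)
    have q02 : c (0,2) = 0 := by simpa using eqK (0,3)
    have q11 : c (1,1) = 0 := by simpa using eqK (1,2)
    have q12 : c (1,2) = 0 := by simpa using eqK (1,3)
    have q10 : c (1,0) = 0 := by simpa using eqK (2,0)
    have q13 : c (1,3) + c (2,2) = 0 := by simpa using eqK (2,3)
    have q20 : c (2,0) = 0 := by simpa using eqK (3,0)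
    have q21 : c (2,1) = 0 := by simpa using eqK (3,1)
    have q31 : c (2,2) + c (3,1) = 0 := by simpa using eqK (3,2)
    have q32 : c (2,3) + c (3,2) = 0 := by simpa using eqK (3,3)
    have q00 : c (0,0) = 0 := by simpa using eqH (0,2)
    have q03 : c (0,3) = 0 := by simpa using eqH (2,3)
    have q30 : c (3,0) = 0 := by simpa using eqH (3,2)
    have r13 : c (1,3) = -c (2,2) := by linarith
    have r31 : c (3,1) = -c (2,2) := by linarith
    have r32 : c (3,2) = -c (2,3) := by linarith
    have hfinal : η = c (2,2) • (P ⊗ₜ[ℝ] P - M ⊗ₜ[ℝ] H - H ⊗ₜ[ℝ] M)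
        + c (3,3) • (M ⊗ₜ[ℝ] M) + c (2,3) • (P ⊗ₜ[ℝ] M - M ⊗ₜ[ℝ] P) := by
      rw [hη, q00, q01, q02, q03, q10, q11, q12, q20, q21, q30, r13, r31, r32]
      module
    rw [hfinal]
    refine Submodule.add_mem _ (Submodule.add_mem _ ?_ ?_) ?_ <;>
      refine Submodule.smul_mem _ _ (Submodule.subset_span ?_)
    · exact Set.mem_insert _ _
    · exact Set.mem_insert_of_mem _ (Set.mem_insert _ _)
    · exact Set.mem_insert_of_mem _ (Set.mem_insert_of_mem _ rfl)
  · intro hmem X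
    rw [comm_eq]
    suffices hz : gD X η = 0 by rw [hz, map_zero]
    have hXH : ⁅X, H⁆ = (b.repr X 0) • P := by
      conv_lhs => rw [← b.sum_repr X]
      rw [Fin.sum_univ_four, hbK, hbH, hbP, hbM]
      simp [add_lie, smul_lie, hKH, hPH, hMH]
    have hXP : ⁅X, P⁆ = (b.repr X 0) • M := by
      conv_lhs => rw [← b.sum_repr X]
      rw [Fin.sum_univ_four, hbK, hbH, hbP, hbM]
      simp [add_lie, smul_lie, hKP, hHP, hMP]
    have hXM : ⁅X, M⁆ = 0 := by
      conv_lhs => rw [← b.sum_repr X]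
      rw [Fin.sum_univ_four, hbK, hbH, hbP, hbM]
      simp [add_lie, smul_lie, hKM, hHM, hPM]
    have hker : Submodule.span ℝ
        ({P ⊗ₜ[ℝ] P - M ⊗ₜ[ℝ] H - H ⊗ₜ[ℝ] M, M ⊗ₜ[ℝ] M,
          P ⊗ₜ[ℝ] M - M ⊗ₜ[ℝ] P} : Set (L ⊗[ℝ] L)) ≤ LinearMap.ker (gD X) := by
      rw [Submodule.span_le]
      intro w hw
      simp only [Set.mem_insert_iff, Set.mem_singleton_iff] at hw
      rcases hw with rfl | rfl | rfl <;>
      · rw [SetLike.mem_coe, LinearMap.mem_ker]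
        simp only [map_sub, gD_tmul, hXH, hXP, hXM,
          TensorProduct.zero_tmul, TensorProduct.tmul_zero, add_zero, zero_add,
          TensorProduct.smul_tmul', TensorProduct.tmul_smul]
        try module
    exact LinearMap.mem_ker.mp (hker hmem)
end
end

section
/- Let r = a₁ K∧P + a₂ K∧M + a₄ P∧M + a₅ P∧H + a₆ M∧H ∈ 𝔤⊗𝔤 (i.e. a classical r-matrix of the form (da) with a₃ = 0). Then the coboundary map δ_r(X) := [X⊗1 + 1⊗X, r] is given by δ_r(K) = a₁ K∧M − a₆ P∧M − a₅ H∧M, δ_r(H) = −a₂ P∧M, δ_r(P) = a₁ P∧M, δ_r(M) = 0; that is, δ_r is the family-Ia cocommutator with ξ = β₄ = a₁, β₁ = −a₆, β₂ = −a₅, β₃ = −a₂, β₅ = 0. -/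
open scoped TensorProduct

noncomputable section

variable {L : Type} [LieRing L] [LieAlgebra ℝ L]

/-- `x∧y = ι(x)⊗ι(y) − ι(y)⊗ι(x) ∈ U(𝔤)⊗U(𝔤)`. -/
def w2 (x y : L) :
    UniversalEnvelopingAlgebra ℝ L ⊗[ℝ] UniversalEnvelopingAlgebra ℝ L :=
  ue x ⊗ₜ[ℝ] ue y - ue y ⊗ₜ[ℝ] ue x

lemma ue_lie (x y : L) : ue ⁅x, y⁆ = ue x * ue y - ue y * ue x := by
  letI : LieRing (UniversalEnvelopingAlgebra ℝ L) := LieRing.ofAssociativeRing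
  have := (UniversalEnvelopingAlgebra.ι ℝ (L := L)).map_lie x y
  simpa [ue, Ring.lie_def] using this

lemma keyδ (X x y : L) :
    (ue X ⊗ₜ[ℝ] (1 : UniversalEnvelopingAlgebra ℝ L) +
      (1 : UniversalEnvelopingAlgebra ℝ L) ⊗ₜ[ℝ] ue X) * w2 x y -
    w2 x y * (ue X ⊗ₜ[ℝ] (1 : UniversalEnvelopingAlgebra ℝ L) +
        (1 : UniversalEnvelopingAlgebra ℝ L) ⊗ₜ[ℝ] ue X)
    = w2 ⁅X, x⁆ y + w2 x ⁅X, y⁆ := by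
  simp only [w2, ue_lie, add_mul, mul_add, sub_mul, mul_sub,
    Algebra.TensorProduct.tmul_mul_tmul, one_mul, mul_one,
    TensorProduct.sub_tmul, TensorProduct.tmul_sub]
  abel

lemma w2_zero_right (x : L) : w2 x 0 = 0 := by simp [w2, ue]
lemma w2_zero_left (x : L) : w2 0 x = 0 := by simp [w2, ue]
lemma w2_self (x : L) : w2 x x = 0 := by simp [w2]
lemma ue_neg (x : L) : ue (-x) = -ue x := by
  have h : ue (-x) + ue x = 0 := by
    rw [ue, ue, ← map_add (UniversalEnvelopingAlgebra.ι ℝ (L := L)), neg_add_cancel, map_zero]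
  exact eq_neg_of_add_eq_zero_left h
lemma w2_neg_left (x y : L) : w2 (-x) y = -w2 x y := by
  rw [w2, w2, ue_neg, TensorProduct.neg_tmul, TensorProduct.tmul_neg]
  abel

lemma comm_add {A : Type*} [Ring A] (S u v : A) :
    S * (u + v) - (u + v) * S = (S * u - u * S) + (S * v - v * S) := by
  noncomm_ring
lemma comm_smul {A : Type*} [Ring A] [Algebra ℝ A] (a : ℝ) (S u : A) :
    S * (a • u) - (a • u) * S = a • (S * u - u * S) := by
  rw [mul_smul_comm, smul_mul_assoc, smul_sub]
lemma w2_swap (x y : L) : w2 y x = -w2 x y := by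
  rw [w2, w2]; abel

/-- For `r = a₁K∧P + a₂K∧M + a₄P∧M + a₅P∧H + a₆M∧H` the coboundary map
`δ_r(X) = [X⊗1 + 1⊗X, r]` is the family-Ia cocommutator with
`ξ = β₄ = a₁`, `β₁ = −a₆`, `β₂ = −a₅`, `β₃ = −a₂`, `β₅ = 0`. -/
theorem galilei_coboundary_cocommutator
    (K H P M : L) (b : Module.Basis (Fin 4) ℝ L)
    (hbK : b 0 = K) (hbH : b 1 = H) (hbP : b 2 = P) (hbM : b 3 = M)
    (hKH : ⁅K, H⁆ = P) (hKP : ⁅K, P⁆ = M) (hHP : ⁅H, P⁆ = (0 : L))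
    (hMK : ⁅M, K⁆ = (0 : L)) (hMH : ⁅M, H⁆ = (0 : L)) (hMP : ⁅M, P⁆ = (0 : L))
    (a₁ a₂ a₄ a₅ a₆ : ℝ) :
    ∀ r : UniversalEnvelopingAlgebra ℝ L ⊗[ℝ] UniversalEnvelopingAlgebra ℝ L,
      r = a₁ • w2 K P + a₂ • w2 K M + a₄ • w2 P M + a₅ • w2 P H + a₆ • w2 M H →
      ∀ δr : L → UniversalEnvelopingAlgebra ℝ L ⊗[ℝ] UniversalEnvelopingAlgebra ℝ L,
        (∀ X : L,
          δr X = (ue X ⊗ₜ[ℝ] (1 : UniversalEnvelopingAlgebra ℝ L) +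
                (1 : UniversalEnvelopingAlgebra ℝ L) ⊗ₜ[ℝ] ue X) * r -
              r * (ue X ⊗ₜ[ℝ] (1 : UniversalEnvelopingAlgebra ℝ L) +
                (1 : UniversalEnvelopingAlgebra ℝ L) ⊗ₜ[ℝ] ue X)) →
        δr K = a₁ • w2 K M - a₆ • w2 P M - a₅ • w2 H M ∧
        δr H = -a₂ • w2 P M ∧
        δr P = a₁ • w2 P M ∧
        δr M = 0 := by
  intro r hr δr hδ
  have hKM : ⁅K, M⁆ = (0 : L) := by rw [← lie_skew, hMK, neg_zero]
  have hHM : ⁅H, M⁆ = (0 : L) := by rw [← lie_skew, hMH, neg_zero]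
  have hPM : ⁅P, M⁆ = (0 : L) := by rw [← lie_skew, hMP, neg_zero]
  have hHK : ⁅H, K⁆ = -P := by rw [← lie_skew, hKH]
  have hPK : ⁅P, K⁆ = -M := by rw [← lie_skew, hKP]
  have hPH : ⁅P, H⁆ = (0 : L) := by rw [← lie_skew, hHP, neg_zero]
  have expand : ∀ X : L, δr X =
      a₁ • (w2 ⁅X,K⁆ P + w2 K ⁅X,P⁆) + a₂ • (w2 ⁅X,K⁆ M + w2 K ⁅X,M⁆) +
      a₄ • (w2 ⁅X,P⁆ M + w2 P ⁅X,M⁆) + a₅ • (w2 ⁅X,P⁆ H + w2 P ⁅X,H⁆) +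
      a₆ • (w2 ⁅X,M⁆ H + w2 M ⁅X,H⁆) := by
    intro X
    rw [hδ X, hr]
    simp only [comm_add, comm_smul, keyδ]
  refine ⟨?_, ?_, ?_, ?_⟩
  · rw [expand K]
    simp only [lie_self, hKP, hKM, hKH, w2_zero_left, w2_zero_right, w2_self]
    rw [w2_swap M H, w2_swap M P]
    module
  · rw [expand H]
    simp only [hHK, hHP, hHM, lie_self, w2_zero_left, w2_zero_right, w2_self,
      w2_neg_left]
    module
  · rw [expand P]
    simp only [hPK, hPH, hPM, lie_self, w2_zero_left, w2_zero_right, w2_self,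
      w2_neg_left]
    rw [w2_swap M P]
    module
  · rw [expand M]
    simp only [hMK, hMH, hMP, w2_zero_left, w2_zero_right, lie_self]
    module
end
end

section
/- Let α ≠ 0 be a real number. The 4-dimensional real Lie algebra with basis {k, h, p, m} and Lie brackets [p,m] = α m, [p,h] = −α h, [h,m] = α p, [k,p] = [k,h] = [k,m] = 0 (the dual Lie algebra of the family-IIa extended Galilei bialgebra) is isomorphic as a real Lie algebra to gl(2,ℝ), the Lie algebra of 2×2 real matrices with the commutator bracket. -/
attribute [local instance 100] LieRing.ofAssociativeRing

noncomputable section FamIIaAux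

open Matrix

/-- elementary matrices -/
def famE (i j : Fin 2) : Matrix (Fin 2) (Fin 2) ℝ := Matrix.single i j 1

/-- images of the basis k,h,p,m in gl2 -/
def famV (α : ℝ) : Fin 4 → Matrix (Fin 2) (Fin 2) ℝ :=
  ![1, (-α/2) • famE 1 0, (α/2) • (famE 0 0 - famE 1 1), α • famE 0 1]

lemma famE_one : (1 : Matrix (Fin 2) (Fin 2) ℝ) = famE 0 0 + famE 1 1 := by
  ext i j
  fin_cases i <;> fin_cases j <;>
    simp [famE, Matrix.single, Matrix.one_apply]

lemma fam_lie_one (X : Matrix (Fin 2) (Fin 2) ℝ) : ⁅(1 : Matrix (Fin 2) (Fin 2) ℝ), X⁆ = 0 := by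
  rw [Ring.lie_def]; simp

lemma fam_lieA (α : ℝ) : ⁅famV α 2, famV α 1⁆ = -α • famV α 1 := by
  ext a c
  fin_cases a <;> fin_cases c <;>
    simp [famV, Ring.lie_def, Matrix.mul_apply, Fin.sum_univ_two, famE,
      Matrix.single, Matrix.smul_apply, Matrix.sub_apply] <;> ring

lemma fam_lieB (α : ℝ) : ⁅famV α 2, famV α 3⁆ = α • famV α 3 := by
  ext a c
  fin_cases a <;> fin_cases c <;>
    simp [famV, Ring.lie_def, Matrix.mul_apply, Fin.sum_univ_two, famE,
      Matrix.single, Matrix.smul_apply, Matrix.sub_apply] <;> ring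

lemma fam_lieC (α : ℝ) : ⁅famV α 1, famV α 3⁆ = α • famV α 2 := by
  ext a c
  fin_cases a <;> fin_cases c <;>
    simp [famV, Ring.lie_def, Matrix.mul_apply, Fin.sum_univ_two, famE,
      Matrix.single, Matrix.smul_apply, Matrix.sub_apply] <;> ring

lemma fam_w00 (α : ℝ) (hα : α ≠ 0) :
    (1/2 : ℝ) • famV α 0 + (1/α) • famV α 2 = famE 0 0 := by
  ext a c
  fin_cases a <;> fin_cases c <;>
    simp [famV, famE, Matrix.single, Matrix.smul_apply, Matrix.sub_apply,
      Matrix.one_apply, Matrix.add_apply] <;> field_simp <;> norm_num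

lemma fam_w11 (α : ℝ) (hα : α ≠ 0) :
    (1/2 : ℝ) • famV α 0 - (1/α) • famV α 2 = famE 1 1 := by
  ext a c
  fin_cases a <;> fin_cases c <;>
    simp [famV, famE, Matrix.single, Matrix.smul_apply, Matrix.sub_apply,
      Matrix.one_apply, Matrix.add_apply] <;> field_simp <;> norm_num

lemma fam_w10 (α : ℝ) (hα : α ≠ 0) : (-2/α) • famV α 1 = famE 1 0 := by
  ext a c
  fin_cases a <;> fin_cases c <;>
    simp [famV, famE, Matrix.single, Matrix.smul_apply] <;> field_simp

lemma fam_w01 (α : ℝ) (hα : α ≠ 0) : (1/α) • famV α 3 = famE 0 1 := by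
  ext a c
  fin_cases a <;> fin_cases c <;>
    simp [famV, famE, Matrix.single, Matrix.smul_apply] <;> field_simp

end FamIIaAux

/-- The dual Lie algebra of the family-IIa extended Galilei bialgebra, with
brackets `[p,m] = αm`, `[p,h] = −αh`, `[h,m] = αp` and `k` central (`α ≠ 0`),
is isomorphic to `gl(2,ℝ)`. -/
theorem familyIIa_dual_iso_gl2
    {L : Type} [LieRing L] [LieAlgebra ℝ L]
    (k h p m : L) (b : Module.Basis (Fin 4) ℝ L)
    (hbk : b 0 = k) (hbh : b 1 = h) (hbp : b 2 = p) (hbm : b 3 = m)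
    (α : ℝ) (hα : α ≠ 0)
    (hpm : ⁅p, m⁆ = α • m) (hph : ⁅p, h⁆ = -α • h) (hhm : ⁅h, m⁆ = α • p)
    (hkp : ⁅k, p⁆ = (0 : L)) (hkh : ⁅k, h⁆ = (0 : L)) (hkm : ⁅k, m⁆ = (0 : L)) :
    Nonempty (L ≃ₗ⁅ℝ⁆ Matrix (Fin 2) (Fin 2) ℝ) := by
  classical
  subst hbk hbh hbp hbm
  let f : L →ₗ[ℝ] Matrix (Fin 2) (Fin 2) ℝ := b.constr ℝ (famV α)
  have hfb : ∀ i, f (b i) = famV α i := fun i => b.constr_basis ℝ (famV α) i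
  let w : Fin 2 × Fin 2 → L :=
    fun ij => ![![(1/2 : ℝ) • b 0 + (1/α) • b 2, (1/α) • b 3],
                ![(-2/α) • b 1, (1/2 : ℝ) • b 0 - (1/α) • b 2]] ij.1 ij.2
  let g : Matrix (Fin 2) (Fin 2) ℝ →ₗ[ℝ] L := (Matrix.stdBasis ℝ (Fin 2) (Fin 2)).constr ℝ w
  have hgE : ∀ i j : Fin 2, g (famE i j) = w (i, j) := by
    intro i j
    rw [famE, ← Matrix.stdBasis_eq_single]
    exact (Matrix.stdBasis ℝ (Fin 2) (Fin 2)).constr_basis ℝ w (i, j)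
  have hw00 : w (0, 0) = (1/2 : ℝ) • b 0 + (1/α) • b 2 := rfl
  have hw01 : w (0, 1) = (1/α) • b 3 := rfl
  have hw10 : w (1, 0) = (-2/α) • b 1 := rfl
  have hw11 : w (1, 1) = (1/2 : ℝ) • b 0 - (1/α) • b 2 := rfl
  have hgf : g.comp f = LinearMap.id := by
    apply b.ext
    intro i
    rw [LinearMap.comp_apply, LinearMap.id_apply, hfb]
    fin_cases i
    · show g (famV α 0) = b 0
      rw [show famV α 0 = (1 : Matrix (Fin 2) (Fin 2) ℝ) from rfl, famE_one, map_add,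
        hgE, hgE, hw00, hw11]
      module
    · show g (famV α 1) = b 1
      rw [show famV α 1 = (-α/2) • famE 1 0 from rfl, map_smul, hgE, hw10, smul_smul]
      rw [show (-α/2) * (-2/α) = 1 by field_simp, one_smul]
    · show g (famV α 2) = b 2
      rw [show famV α 2 = (α/2) • (famE 0 0 - famE 1 1) from rfl, map_smul, map_sub,
        hgE, hgE, hw00, hw11]
      match_scalars <;> (field_simp; try ring)
    · show g (famV α 3) = b 3
      rw [show famV α 3 = α • famE 0 1 from rfl, map_smul, hgE, hw01, smul_smul]
      rw [show α * (1/α) = 1 by field_simp, one_smul]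
  have hfg : f.comp g = LinearMap.id := by
    apply (Matrix.stdBasis ℝ (Fin 2) (Fin 2)).ext
    rintro ⟨i, j⟩
    rw [LinearMap.comp_apply, LinearMap.id_apply, Matrix.stdBasis_eq_single,
      show Matrix.single i j (1:ℝ) = famE i j from rfl, hgE]
    fin_cases i <;> fin_cases j
    · show f (w (0, 0)) = famE 0 0
      rw [hw00, map_add, map_smul, map_smul, hfb, hfb]
      exact fam_w00 α hα
    · show f (w (0, 1)) = famE 0 1
      rw [hw01, map_smul, hfb]
      exact fam_w01 α hα
    · show f (w (1, 0)) = famE 1 0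
      rw [hw10, map_smul, hfb]
      exact fam_w10 α hα
    · show f (w (1, 1)) = famE 1 1
      rw [hw11, map_sub, map_smul, map_smul, hfb, hfb]
      exact fam_w11 α hα
  have key : ∀ x y : L, f ⁅x, y⁆ = ⁅f x, f y⁆ := by
    let B1 : L →ₗ[ℝ] L →ₗ[ℝ] Matrix (Fin 2) (Fin 2) ℝ :=
      LinearMap.mk₂ ℝ (fun x y => f ⁅x, y⁆)
        (fun x x' y => by simp only [add_lie, map_add])
        (fun c x y => by simp only [smul_lie, map_smul])
        (fun x y y' => by simp only [lie_add, map_add])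
        (fun c x y => by simp only [lie_smul, map_smul])
    let B2 : L →ₗ[ℝ] L →ₗ[ℝ] Matrix (Fin 2) (Fin 2) ℝ :=
      LinearMap.mk₂ ℝ (fun x y => ⁅f x, f y⁆)
        (fun x x' y => by simp only [map_add, add_lie])
        (fun c x y => by simp only [map_smul, smul_lie])
        (fun x y y' => by simp only [map_add, lie_add])
        (fun c x y => by simp only [map_smul, lie_smul])
    have hB : B1 = B2 := by
      apply b.ext; intro i
      apply b.ext; intro j
      show f ⁅b i, b j⁆ = ⁅f (b i), f (b j)⁆
      have skew : ∀ x y : L, f ⁅x, y⁆ = -(f ⁅y, x⁆) := by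
        intro x y; rw [← lie_skew, map_neg]
      fin_cases i <;> fin_cases j <;>
        simp only [Fin.zero_eta, Fin.mk_one, Fin.reduceFinMk, hfb] <;>
        first
        | (rw [lie_self, map_zero, lie_self])
        | (rw [hkh, map_zero, show famV α 0 = 1 from rfl, fam_lie_one])
        | (rw [hkp, map_zero, show famV α 0 = 1 from rfl, fam_lie_one])
        | (rw [hkm, map_zero, show famV α 0 = 1 from rfl, fam_lie_one])
        | (rw [skew, hkh, map_zero, neg_zero, ← lie_skew,
            show famV α 0 = 1 from rfl, fam_lie_one, neg_zero])
        | (rw [skew, hkp, map_zero, neg_zero, ← lie_skew,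
            show famV α 0 = 1 from rfl, fam_lie_one, neg_zero])
        | (rw [skew, hkm, map_zero, neg_zero, ← lie_skew,
            show famV α 0 = 1 from rfl, fam_lie_one, neg_zero])
        | (rw [hph, map_smul, hfb, fam_lieA α])
        | (rw [hpm, map_smul, hfb, fam_lieB α])
        | (rw [hhm, map_smul, hfb, fam_lieC α])
        | (rw [skew, hph, map_smul, hfb, ← lie_skew, fam_lieA α]; try module)
        | (rw [skew, hpm, map_smul, hfb, ← lie_skew, fam_lieB α]; try module)
        | (rw [skew, hhm, map_smul, hfb, ← lie_skew, fam_lieC α]; try module)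
    intro x y
    exact LinearMap.congr_fun (LinearMap.congr_fun hB x) y
  let F : L →ₗ⁅ℝ⁆ Matrix (Fin 2) (Fin 2) ℝ :=
    { f with map_lie' := fun {x y} => key x y }
  exact ⟨{ F with
    invFun := g
    left_inv := fun x => LinearMap.congr_fun hgf x
    right_inv := fun A => LinearMap.congr_fun hfg A }⟩
end

section
/- Let ξ ≠ 0 and β₁ be real numbers, m₁, m₂ nonzero real numbers, and F : ℝ → ℝ a differentiable function. Set ℳᵢ = (e^{2ξmᵢ} − 1)/(2ξ) for i = 1, 2 (so ℳ₁, ℳ₂ ≠ 0). On ℝ⁴ with the canonical Poisson bracket, the deformed two-particle Hamiltonian ℋ = p₁²/(2ℳ₁) + p₂²/(2ℳ₂) + F(e^{ξm₂}ℳ₁ q₁ + ℳ₂ q₂ + β₁ e^{ξm₂} m₂ p₁) Poisson-commutes with C = −(ℳ₂ p₁ − ℳ₁ e^{ξm₂} p₂)²/(ℳ₁ℳ₂). -/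
open scoped Topology

noncomputable section

/-- The canonical Poisson bracket on `ℝ⁴` with coordinates `(q₁, p₁, q₂, p₂)`:
`{f,g} = ∂f/∂q₁·∂g/∂p₁ − ∂f/∂p₁·∂g/∂q₁ + ∂f/∂q₂·∂g/∂p₂ − ∂f/∂p₂·∂g/∂q₂`. -/
def pbracket (f g : ℝ × ℝ × ℝ × ℝ → ℝ) (z : ℝ × ℝ × ℝ × ℝ) : ℝ :=
  fderiv ℝ f z (1, 0, 0, 0) * fderiv ℝ g z (0, 1, 0, 0) -
    fderiv ℝ f z (0, 1, 0, 0) * fderiv ℝ g z (1, 0, 0, 0) +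
    fderiv ℝ f z (0, 0, 1, 0) * fderiv ℝ g z (0, 0, 0, 1) -
    fderiv ℝ f z (0, 0, 0, 1) * fderiv ℝ g z (0, 0, 1, 0)

/-- The deformed two-particle Hamiltonian of the standard quantum Galilei
coalgebra `U^{(s)}_{ξ,β₁}(𝔤)`, with deformed masses
`ℳᵢ = (e^{2ξmᵢ} − 1)/(2ξ)`, Poisson-commutes with the coproduct of the deformed
Casimir `C = −(ℳ₂p₁ − ℳ₁e^{ξm₂}p₂)²/(ℳ₁ℳ₂)`. -/
theorem standard_deformed_integrable_hamiltonian
    (ξ : ℝ) (hξ : ξ ≠ 0) (m₁ m₂ : ℝ) (hm₁ : m₁ ≠ 0) (hm₂ : m₂ ≠ 0) (β₁ : ℝ)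
    (F : ℝ → ℝ) (hF : Differentiable ℝ F)
    (M₁ M₂ : ℝ)
    (hM₁ : M₁ = (Real.exp (2 * ξ * m₁) - 1) / (2 * ξ))
    (hM₂ : M₂ = (Real.exp (2 * ξ * m₂) - 1) / (2 * ξ))
    (Ham C : ℝ × ℝ × ℝ × ℝ → ℝ)
    (hHam : Ham = fun z =>
      z.2.1 ^ 2 / (2 * M₁) + z.2.2.2 ^ 2 / (2 * M₂) +
        F (Real.exp (ξ * m₂) * M₁ * z.1 + M₂ * z.2.2.1 +
            β₁ * Real.exp (ξ * m₂) * m₂ * z.2.1))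
    (hC : C = fun z =>
      -(M₂ * z.2.1 - M₁ * Real.exp (ξ * m₂) * z.2.2.2) ^ 2 / (M₁ * M₂)) :
    ∀ z, pbracket Ham C z = 0 := by
  have hM₁0 : M₁ ≠ 0 := by
    rw [hM₁]
    refine div_ne_zero (sub_ne_zero.mpr ?_) (by simp [hξ])
    rw [Ne, Real.exp_eq_one_iff]
    intro h
    rcases mul_eq_zero.mp h with h | h
    · exact hξ (by rcases mul_eq_zero.mp h with h | h <;> simp_all)
    · exact hm₁ h
  have hM₂0 : M₂ ≠ 0 := by
    rw [hM₂]
    refine div_ne_zero (sub_ne_zero.mpr ?_) (by simp [hξ])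
    rw [Ne, Real.exp_eq_one_iff]
    intro h
    rcases mul_eq_zero.mp h with h | h
    · exact hξ (by rcases mul_eq_zero.mp h with h | h <;> simp_all)
    · exact hm₂ h
  intro z
  set a := Real.exp (ξ * m₂) with ha
  -- coordinate projections as continuous linear maps
  set π1 : ℝ × ℝ × ℝ × ℝ →L[ℝ] ℝ := ContinuousLinearMap.fst ℝ ℝ (ℝ × ℝ × ℝ) with hπ1
  set π2 : ℝ × ℝ × ℝ × ℝ →L[ℝ] ℝ :=
    (ContinuousLinearMap.fst ℝ ℝ (ℝ × ℝ)).comp (ContinuousLinearMap.snd ℝ ℝ (ℝ × ℝ × ℝ)) with hπ2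
  set π3 : ℝ × ℝ × ℝ × ℝ →L[ℝ] ℝ :=
    ((ContinuousLinearMap.fst ℝ ℝ ℝ).comp (ContinuousLinearMap.snd ℝ ℝ (ℝ × ℝ))).comp
      (ContinuousLinearMap.snd ℝ ℝ (ℝ × ℝ × ℝ)) with hπ3
  set π4 : ℝ × ℝ × ℝ × ℝ →L[ℝ] ℝ :=
    ((ContinuousLinearMap.snd ℝ ℝ ℝ).comp (ContinuousLinearMap.snd ℝ ℝ (ℝ × ℝ))).comp
      (ContinuousLinearMap.snd ℝ ℝ (ℝ × ℝ × ℝ)) with hπ4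
  have hq1 : HasFDerivAt (fun z : ℝ × ℝ × ℝ × ℝ => z.1) π1 z := hasFDerivAt_fst
  have hp1 : HasFDerivAt (fun z : ℝ × ℝ × ℝ × ℝ => z.2.1) π2 z :=
    hasFDerivAt_fst.comp z hasFDerivAt_snd
  have hq2 : HasFDerivAt (fun z : ℝ × ℝ × ℝ × ℝ => z.2.2.1) π3 z :=
    (hasFDerivAt_fst.comp _ hasFDerivAt_snd).comp z hasFDerivAt_snd
  have hp2 : HasFDerivAt (fun z : ℝ × ℝ × ℝ × ℝ => z.2.2.2) π4 z :=
    (hasFDerivAt_snd.comp _ hasFDerivAt_snd).comp z hasFDerivAt_snd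
  -- argument of F
  set g : ℝ × ℝ × ℝ × ℝ → ℝ := fun z => a * M₁ * z.1 + M₂ * z.2.2.1 + β₁ * a * m₂ * z.2.1
    with hg
  have hgd : HasFDerivAt g ((a * M₁) • π1 + M₂ • π3 + (β₁ * a * m₂) • π2) z :=
    ((hq1.const_mul _).add (hq2.const_mul _)).add (hp1.const_mul _)
  have hFc : HasFDerivAt (fun z : ℝ × ℝ × ℝ × ℝ => F (g z))
      (deriv F (g z) • ((a * M₁) • π1 + M₂ • π3 + (β₁ * a * m₂) • π2)) z :=
    (hF (g z)).hasDerivAt.comp_hasFDerivAt z hgd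
  have hH : HasFDerivAt Ham
      ((1 / (2 * M₁)) • (z.2.1 • π2 + z.2.1 • π2) +
        (1 / (2 * M₂)) • (z.2.2.2 • π4 + z.2.2.2 • π4) +
        deriv F (g z) • ((a * M₁) • π1 + M₂ • π3 + (β₁ * a * m₂) • π2)) z := by
    have hfun : Ham = fun w : ℝ × ℝ × ℝ × ℝ =>
        (1 / (2 * M₁)) * (w.2.1 * w.2.1) + (1 / (2 * M₂)) * (w.2.2.2 * w.2.2.2) + F (g w) := by
      rw [hHam]; funext w; rw [hg]; ring_nf
    rw [hfun]
    exact (((hp1.mul hp1).const_mul _).add ((hp2.mul hp2).const_mul _)).add hFc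
  set w : ℝ × ℝ × ℝ × ℝ → ℝ := fun z => M₂ * z.2.1 - M₁ * a * z.2.2.2 with hw
  have hwd : HasFDerivAt w (M₂ • π2 - (M₁ * a) • π4) z :=
    (hp1.const_mul _).sub (hp2.const_mul _)
  have hCd : HasFDerivAt C
      ((-(1 / (M₁ * M₂))) • (w z • (M₂ • π2 - (M₁ * a) • π4) +
        w z • (M₂ • π2 - (M₁ * a) • π4))) z := by
    have hfun : C = fun z : ℝ × ℝ × ℝ × ℝ => (-(1 / (M₁ * M₂))) * (w z * w z) := by
      rw [hC]; funext u; rw [hw]; ring_nf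
    rw [hfun]
    exact (hwd.mul hwd).const_mul _
  rw [pbracket, hH.fderiv, hCd.fderiv]
  simp only [ContinuousLinearMap.add_apply, ContinuousLinearMap.smul_apply,
    ContinuousLinearMap.sub_apply, ContinuousLinearMap.coe_comp', Function.comp_apply,
    ContinuousLinearMap.coe_fst', ContinuousLinearMap.coe_snd', hπ1, hπ2, hπ3, hπ4,
    smul_eq_mul]
  field_simp
  ring
end
end

section
/- Let α ≠ 0 be a real number, m₁, m₂ nonzero real numbers, and F : ℝ → ℝ a differentiable function. On ℝ⁴ with the canonical Poisson bracket, the deformed two-particle Hamiltonian ℋ = (1/(2m₁))·(sinh(αp₁/4)/(α/4))² + (1/(2m₂))·(sinh(αp₂/4)/(α/4))² + F(m₁ e^{−αp₁/2} e^{−αp₂} q₁ + m₂ e^{−αp₂/2} q₂) Poisson-commutes with C = −(1/(m₁m₂))·( m₂·(sinh(αp₁/4)/(α/4))·e^{αp₁/4} − m₁·(sinh(αp₂/4)/(α/4))·e^{−αp₂/4} )². -/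
open scoped Topology

noncomputable section

private lemma dirDeriv {f : ℝ × ℝ × ℝ × ℝ → ℝ} {z v : ℝ × ℝ × ℝ × ℝ} {c : ℝ}
    (hf : DifferentiableAt ℝ f z)
    (h : HasDerivAt (fun t : ℝ => f (z + t • v)) c 0) :
    fderiv ℝ f z v = c := by
  have hg : HasDerivAt (fun t : ℝ => z + t • v) v 0 := by
    simpa using ((hasDerivAt_id (0 : ℝ)).smul_const v).const_add z
  have h0 : z + (0 : ℝ) • v = z := by simp
  have hf' : HasFDerivAt f (fderiv ℝ f z) (z + (0 : ℝ) • v) := by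
    rw [h0]; exact hf.hasFDerivAt
  exact (hf'.comp_hasDerivAt 0 hg).unique h

set_option maxHeartbeats 2000000 in
/-- The deformed two-particle Hamiltonian of the family-IIb quantum Galilei
coalgebra `U_α(𝔤)` (with `β₁ = β₂ = 0`) Poisson-commutes with the coproduct of
the deformed Casimir. -/
theorem familyIIb_deformed_integrable_hamiltonian
    (α : ℝ) (hα : α ≠ 0) (m₁ m₂ : ℝ) (hm₁ : m₁ ≠ 0) (hm₂ : m₂ ≠ 0)
    (F : ℝ → ℝ) (hF : Differentiable ℝ F)
    (Ham C : ℝ × ℝ × ℝ × ℝ → ℝ)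
    (hHam : Ham = fun z =>
      (1 / (2 * m₁)) * (Real.sinh (α * z.2.1 / 4) / (α / 4)) ^ 2 +
        (1 / (2 * m₂)) * (Real.sinh (α * z.2.2.2 / 4) / (α / 4)) ^ 2 +
        F (m₁ * Real.exp (-α * z.2.1 / 2) * Real.exp (-α * z.2.2.2) * z.1 +
            m₂ * Real.exp (-α * z.2.2.2 / 2) * z.2.2.1))
    (hC : C = fun z =>
      -(1 / (m₁ * m₂)) *
        (m₂ * (Real.sinh (α * z.2.1 / 4) / (α / 4)) * Real.exp (α * z.2.1 / 4) -
          m₁ * (Real.sinh (α * z.2.2.2 / 4) / (α / 4)) *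
            Real.exp (-α * z.2.2.2 / 4)) ^ 2) :
    ∀ z, pbracket Ham C z = 0 := by
  subst hHam hC
  rintro ⟨q, p, r, s⟩
  have hHamD : DifferentiableAt ℝ (fun z : ℝ × ℝ × ℝ × ℝ =>
      (1 / (2 * m₁)) * (Real.sinh (α * z.2.1 / 4) / (α / 4)) ^ 2 +
        (1 / (2 * m₂)) * (Real.sinh (α * z.2.2.2 / 4) / (α / 4)) ^ 2 +
        F (m₁ * Real.exp (-α * z.2.1 / 2) * Real.exp (-α * z.2.2.2) * z.1 +
            m₂ * Real.exp (-α * z.2.2.2 / 2) * z.2.2.1)) (q, p, r, s) := by fun_prop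
  have hCD : DifferentiableAt ℝ (fun z : ℝ × ℝ × ℝ × ℝ =>
      -(1 / (m₁ * m₂)) *
        (m₂ * (Real.sinh (α * z.2.1 / 4) / (α / 4)) * Real.exp (α * z.2.1 / 4) -
          m₁ * (Real.sinh (α * z.2.2.2 / 4) / (α / 4)) *
            Real.exp (-α * z.2.2.2 / 4)) ^ 2) (q, p, r, s) := by fun_prop
  set u : ℝ := m₁ * Real.exp (-α * p / 2) * Real.exp (-α * s) * q +
      m₂ * Real.exp (-α * s / 2) * r with hu
  set d : ℝ := deriv F u with hd
  have hFd : HasDerivAt F d u := (hF u).hasDerivAt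
  set W : ℝ := m₂ * (Real.sinh (α * p / 4) / (α / 4)) * Real.exp (α * p / 4) -
      m₁ * (Real.sinh (α * s / 4) / (α / 4)) * Real.exp (-α * s / 4) with hW
  -- ∂C/∂q₁ = 0
  have hC1 : fderiv ℝ (fun z : ℝ × ℝ × ℝ × ℝ =>
      -(1 / (m₁ * m₂)) *
        (m₂ * (Real.sinh (α * z.2.1 / 4) / (α / 4)) * Real.exp (α * z.2.1 / 4) -
          m₁ * (Real.sinh (α * z.2.2.2 / 4) / (α / 4)) *
            Real.exp (-α * z.2.2.2 / 4)) ^ 2) (q, p, r, s) (1, 0, 0, 0) = 0 := by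
    apply dirDeriv hCD
    have he : ∀ t : ℝ, ((q,p,r,s) : ℝ×ℝ×ℝ×ℝ) + t • ((((1:ℝ),(0:ℝ),(0:ℝ),(0:ℝ)) : ℝ×ℝ×ℝ×ℝ)) = ((q + t, p, r, s) : ℝ×ℝ×ℝ×ℝ) := by
      intro t; simp [Prod.smul_mk, Prod.mk_add_mk]
    simp only [he]
    exact hasDerivAt_const 0 _
  -- ∂C/∂q₂ = 0
  have hC3 : fderiv ℝ (fun z : ℝ × ℝ × ℝ × ℝ =>
      -(1 / (m₁ * m₂)) *
        (m₂ * (Real.sinh (α * z.2.1 / 4) / (α / 4)) * Real.exp (α * z.2.1 / 4) -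
          m₁ * (Real.sinh (α * z.2.2.2 / 4) / (α / 4)) *
            Real.exp (-α * z.2.2.2 / 4)) ^ 2) (q, p, r, s) (0, 0, 1, 0) = 0 := by
    apply dirDeriv hCD
    have he : ∀ t : ℝ, ((q,p,r,s) : ℝ×ℝ×ℝ×ℝ) + t • ((((0:ℝ),(0:ℝ),(1:ℝ),(0:ℝ)) : ℝ×ℝ×ℝ×ℝ)) = ((q, p, r + t, s) : ℝ×ℝ×ℝ×ℝ) := by
      intro t; simp [Prod.smul_mk, Prod.mk_add_mk]
    simp only [he]
    exact hasDerivAt_const 0 _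
  -- ∂H/∂q₁
  have hH1 : fderiv ℝ (fun z : ℝ × ℝ × ℝ × ℝ =>
      (1 / (2 * m₁)) * (Real.sinh (α * z.2.1 / 4) / (α / 4)) ^ 2 +
        (1 / (2 * m₂)) * (Real.sinh (α * z.2.2.2 / 4) / (α / 4)) ^ 2 +
        F (m₁ * Real.exp (-α * z.2.1 / 2) * Real.exp (-α * z.2.2.2) * z.1 +
            m₂ * Real.exp (-α * z.2.2.2 / 2) * z.2.2.1)) (q, p, r, s) (1, 0, 0, 0)
      = d * (m₁ * Real.exp (-α * p / 2) * Real.exp (-α * s)) := by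
    apply dirDeriv hHamD
    have he : ∀ t : ℝ, ((q,p,r,s) : ℝ×ℝ×ℝ×ℝ) + t • ((((1:ℝ),(0:ℝ),(0:ℝ),(0:ℝ)) : ℝ×ℝ×ℝ×ℝ)) = ((q + t, p, r, s) : ℝ×ℝ×ℝ×ℝ) := by
      intro t; simp [Prod.smul_mk, Prod.mk_add_mk]
    simp only [he]
    have inner : HasDerivAt (fun t : ℝ =>
        m₁ * Real.exp (-α * p / 2) * Real.exp (-α * s) * (q + t) +
          m₂ * Real.exp (-α * s / 2) * r)
        (m₁ * Real.exp (-α * p / 2) * Real.exp (-α * s) * 1) 0 :=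
      (((hasDerivAt_id (0:ℝ)).const_add q).const_mul
        (m₁ * Real.exp (-α * p / 2) * Real.exp (-α * s))).add_const _
    have hFd1 : HasDerivAt F d
        (m₁ * Real.exp (-α * p / 2) * Real.exp (-α * s) * (q + (0:ℝ)) +
          m₂ * Real.exp (-α * s / 2) * r) := by
      rw [show m₁ * Real.exp (-α * p / 2) * Real.exp (-α * s) * (q + (0:ℝ)) +
          m₂ * Real.exp (-α * s / 2) * r = u from by rw [hu]; ring]
      exact hFd
    have key := (hasDerivAt_const (0:ℝ)
        ((1 / (2 * m₁)) * (Real.sinh (α * p / 4) / (α / 4)) ^ 2 +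
          (1 / (2 * m₂)) * (Real.sinh (α * s / 4) / (α / 4)) ^ 2)).add
        (hFd1.comp 0 inner)
    convert key using 1
    · rfl
    · rfl
    · rfl
    ring
  -- ∂H/∂q₂
  have hH3 : fderiv ℝ (fun z : ℝ × ℝ × ℝ × ℝ =>
      (1 / (2 * m₁)) * (Real.sinh (α * z.2.1 / 4) / (α / 4)) ^ 2 +
        (1 / (2 * m₂)) * (Real.sinh (α * z.2.2.2 / 4) / (α / 4)) ^ 2 +
        F (m₁ * Real.exp (-α * z.2.1 / 2) * Real.exp (-α * z.2.2.2) * z.1 +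
            m₂ * Real.exp (-α * z.2.2.2 / 2) * z.2.2.1)) (q, p, r, s) (0, 0, 1, 0)
      = d * (m₂ * Real.exp (-α * s / 2)) := by
    apply dirDeriv hHamD
    have he : ∀ t : ℝ, ((q,p,r,s) : ℝ×ℝ×ℝ×ℝ) + t • ((((0:ℝ),(0:ℝ),(1:ℝ),(0:ℝ)) : ℝ×ℝ×ℝ×ℝ)) = ((q, p, r + t, s) : ℝ×ℝ×ℝ×ℝ) := by
      intro t; simp [Prod.smul_mk, Prod.mk_add_mk]
    simp only [he]
    have inner : HasDerivAt (fun t : ℝ =>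
        m₁ * Real.exp (-α * p / 2) * Real.exp (-α * s) * q +
          m₂ * Real.exp (-α * s / 2) * (r + t))
        (m₂ * Real.exp (-α * s / 2) * 1) 0 :=
      ((((hasDerivAt_id (0:ℝ)).const_add r).const_mul
        (m₂ * Real.exp (-α * s / 2)))).const_add _
    have hFd1 : HasDerivAt F d
        (m₁ * Real.exp (-α * p / 2) * Real.exp (-α * s) * q +
          m₂ * Real.exp (-α * s / 2) * (r + (0:ℝ))) := by
      rw [show m₁ * Real.exp (-α * p / 2) * Real.exp (-α * s) * q +
          m₂ * Real.exp (-α * s / 2) * (r + (0:ℝ)) = u from by rw [hu]; ring]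
      exact hFd
    have key := (hasDerivAt_const (0:ℝ)
        ((1 / (2 * m₁)) * (Real.sinh (α * p / 4) / (α / 4)) ^ 2 +
          (1 / (2 * m₂)) * (Real.sinh (α * s / 4) / (α / 4)) ^ 2)).add
        (hFd1.comp 0 inner)
    convert key using 1
    · rfl
    · rfl
    · rfl
    ring
  -- ∂C/∂p₁
  have hC2 : fderiv ℝ (fun z : ℝ × ℝ × ℝ × ℝ =>
      -(1 / (m₁ * m₂)) *
        (m₂ * (Real.sinh (α * z.2.1 / 4) / (α / 4)) * Real.exp (α * z.2.1 / 4) -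
          m₁ * (Real.sinh (α * z.2.2.2 / 4) / (α / 4)) *
            Real.exp (-α * z.2.2.2 / 4)) ^ 2) (q, p, r, s) (0, 1, 0, 0)
      = -(1 / (m₁ * m₂)) * (2 * W *
          (m₂ * (Real.cosh (α * p / 4) * Real.exp (α * p / 4) +
            Real.sinh (α * p / 4) / (α / 4) * (Real.exp (α * p / 4) * (α / 4))))) := by
    apply dirDeriv hCD
    have he : ∀ t : ℝ, ((q,p,r,s) : ℝ×ℝ×ℝ×ℝ) + t • ((((0:ℝ),(1:ℝ),(0:ℝ),(0:ℝ)) : ℝ×ℝ×ℝ×ℝ)) = ((q, p + t, r, s) : ℝ×ℝ×ℝ×ℝ) := by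
      intro t; simp [Prod.smul_mk, Prod.mk_add_mk]
    simp only [he]
    have hp : HasDerivAt (fun t : ℝ => α * (p + t) / 4) (α * 1 / 4) 0 :=
      (((hasDerivAt_id (0:ℝ)).const_add p).const_mul α).div_const 4
    have key := (((((hp.sinh.div_const (α / 4)).const_mul m₂).mul hp.exp).sub_const
        (m₁ * (Real.sinh (α * s / 4) / (α / 4)) * Real.exp (-α * s / 4))).pow 2).const_mul
        (-(1 / (m₁ * m₂)))
    convert key using 1
    · rfl
    · rfl
    · rfl
    rw [hW]
    simp only [add_zero, mul_one, pow_one, Nat.cast_ofNat, Pi.mul_apply]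
    rw [mul_div_cancel_right₀ _ (show (α/4 : ℝ) ≠ 0 from by positivity)]
    ring
  -- ∂C/∂p₂
  have hC4 : fderiv ℝ (fun z : ℝ × ℝ × ℝ × ℝ =>
      -(1 / (m₁ * m₂)) *
        (m₂ * (Real.sinh (α * z.2.1 / 4) / (α / 4)) * Real.exp (α * z.2.1 / 4) -
          m₁ * (Real.sinh (α * z.2.2.2 / 4) / (α / 4)) *
            Real.exp (-α * z.2.2.2 / 4)) ^ 2) (q, p, r, s) (0, 0, 0, 1)
      = -(1 / (m₁ * m₂)) * (2 * W *
          (-(m₁ * (Real.cosh (α * s / 4) * Real.exp (-α * s / 4) +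
            Real.sinh (α * s / 4) / (α / 4) * (Real.exp (-α * s / 4) * (-α / 4)))))) := by
    apply dirDeriv hCD
    have he : ∀ t : ℝ, ((q,p,r,s) : ℝ×ℝ×ℝ×ℝ) + t • ((((0:ℝ),(0:ℝ),(0:ℝ),(1:ℝ)) : ℝ×ℝ×ℝ×ℝ)) = ((q, p, r, s + t) : ℝ×ℝ×ℝ×ℝ) := by
      intro t; simp [Prod.smul_mk, Prod.mk_add_mk]
    simp only [he]
    have hs4 : HasDerivAt (fun t : ℝ => α * (s + t) / 4) (α * 1 / 4) 0 :=
      (((hasDerivAt_id (0:ℝ)).const_add s).const_mul α).div_const 4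
    have hsn : HasDerivAt (fun t : ℝ => -α * (s + t) / 4) (-α * 1 / 4) 0 :=
      (((hasDerivAt_id (0:ℝ)).const_add s).const_mul (-α)).div_const 4
    have key := (((((hs4.sinh.div_const (α / 4)).const_mul m₁).mul hsn.exp).const_sub
        (m₂ * (Real.sinh (α * p / 4) / (α / 4)) * Real.exp (α * p / 4))).pow 2).const_mul
        (-(1 / (m₁ * m₂)))
    convert key using 1
    · rfl
    · rfl
    · rfl
    rw [hW]
    simp only [add_zero, mul_one, pow_one, Nat.cast_ofNat, Pi.mul_apply]
    rw [mul_div_cancel_right₀ _ (show (α/4 : ℝ) ≠ 0 from by positivity)]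
    ring
  -- put everything together
  unfold pbracket
  rw [hC1, hC2, hC3, hC4, hH1, hH3, hW]
  set A : ℝ := Real.exp (α * p / 4) with hA
  set B : ℝ := Real.exp (α * s / 4) with hB
  have hA0 : A ≠ 0 := Real.exp_ne_zero _
  have hB0 : B ≠ 0 := Real.exp_ne_zero _
  have e1 : Real.exp (-α * p / 2) = A⁻¹ * A⁻¹ := by
    rw [hA, ← Real.exp_neg, ← Real.exp_add]; congr 1; ring
  have e2 : Real.exp (-α * s) = B⁻¹ * B⁻¹ * (B⁻¹ * B⁻¹) := by
    rw [hB, ← Real.exp_neg, ← Real.exp_add, ← Real.exp_add]; congr 1; ring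
  have e3 : Real.exp (-α * s / 2) = B⁻¹ * B⁻¹ := by
    rw [hB, ← Real.exp_neg, ← Real.exp_add]; congr 1; ring
  have e4 : Real.exp (-α * s / 4) = B⁻¹ := by
    rw [hB, ← Real.exp_neg]; congr 1; ring
  have e5 : Real.sinh (α * p / 4) = (A - A⁻¹) / 2 := by
    rw [hA, Real.sinh_eq, Real.exp_neg]
  have e6 : Real.cosh (α * p / 4) = (A + A⁻¹) / 2 := by
    rw [hA, Real.cosh_eq, Real.exp_neg]
  have e7 : Real.sinh (α * s / 4) = (B - B⁻¹) / 2 := by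
    rw [hB, Real.sinh_eq, Real.exp_neg]
  have e8 : Real.cosh (α * s / 4) = (B + B⁻¹) / 2 := by
    rw [hB, Real.cosh_eq, Real.exp_neg]
  rw [e1, e2, e3, e4, e5, e6, e7, e8]
  field_simp
  ring
end
end
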